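/- arXiv:2303.07834 — 5 statements merged into one kernel-verified Lean document; each statement's English description precedes it below -/
import Mathlib

section
/- Let η ∈ Π̄ be an augmented policy indifferent to the augmented component, with projection Γ(η) ∈ Π_MR. Then for every 0 ≤ t ≤ T-1, every x ∈ 𝒳 and a ∈ 𝒜: Σ_{z ∈ 𝒵} P^η_{(s,𝟏)}(X_t = x, Z_t = z, A_t = a) = P^{Γ(η)}_s(X_t = x, A_t = a). -/
open Finset

/-- The augmented binary component space `𝒵 = {0,1}^{K+1}`. -/
abbrev ZVec (K : ℕ) := Fin (K + 1) → Fin 2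

/-- The all-ones vector `𝟏 ∈ 𝒵`. -/
def oneVec (K : ℕ) : ZVec K := fun _ => 1

/-- `ρ`-factor: `c ^ (z_i * z'_i) * (1 - c) ^ (z_i * (1 - z'_i))` (with `c ^ 0 = 1`). -/
noncomputable def rho (c : ℝ) (zi zi' : Fin 2) : ℝ :=
  c ^ ((zi : ℕ) * (zi' : ℕ)) * (1 - c) ^ ((zi : ℕ) * (1 - (zi' : ℕ)))

/-- Augmented transition function `Q̄_t((x',z') | (x,z), a)`. -/
noncomputable def Qbar {X A : Type*} (K : ℕ)
    (Q : X → A → X → ℝ) (f : ℕ → Fin (K + 1) → X → A → X → ℝ)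
    (t : ℕ) (x : X) (z : ZVec K) (a : A) (x' : X) (z' : ZVec K) : ℝ :=
  if ∃ i, z i = 0 ∧ z' i = 1 then 0
  else Q x a x' * ∏ i, rho (f (t - 1) i x a x') (z i) (z' i)

/-- Probability of the trajectory `(x_0, a_0, …, x_T)` under the Markov randomized policy
`d = (d_t)_{t<T}` starting at `s`. -/
noncomputable def trajProb {X A : Type*} [DecidableEq X]
    (T : ℕ) (Q : X → A → X → ℝ) (d : Fin T → X → A → ℝ) (s : X)
    (xs : Fin (T + 1) → X) (as : Fin T → A) : ℝ :=
  (if xs 0 = s then 1 else 0) *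
    ∏ t : Fin T, d t (xs t.castSucc) (as t) * Q (xs t.castSucc) (as t) (xs t.succ)

/-- Probability of the augmented trajectory `((x_0,z_0), a_0, …, (x_T,z_T))` under the
augmented policy `dbar` starting at `(s, 𝟏)`, with kernels `Q̄_{t+1}` at step `t`. -/
noncomputable def trajProbBar {X A : Type*} [DecidableEq X]
    (T K : ℕ) (Q : X → A → X → ℝ) (f : ℕ → Fin (K + 1) → X → A → X → ℝ)
    (dbar : Fin T → X × ZVec K → A → ℝ) (s : X)
    (xzs : Fin (T + 1) → X × ZVec K) (as : Fin T → A) : ℝ :=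
  (if xzs 0 = (s, oneVec K) then 1 else 0) *
    ∏ t : Fin T, dbar t (xzs t.castSucc) (as t) *
      Qbar K Q f ((t : ℕ) + 1) (xzs t.castSucc).1 (xzs t.castSucc).2 (as t)
        (xzs t.succ).1 (xzs t.succ).2

/-- `P^π_s(X_t = x, A_t = a)`, the marginal of the trajectory measure in the original model. -/
noncomputable def Pmarg {X A : Type*} [Fintype X] [Fintype A] [DecidableEq X] [DecidableEq A]
    (T : ℕ) (Q : X → A → X → ℝ) (d : Fin T → X → A → ℝ) (s : X)
    (t : Fin T) (x : X) (a : A) : ℝ :=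
  ∑ xs : Fin (T + 1) → X, ∑ as : Fin T → A,
    if xs t.castSucc = x ∧ as t = a then trajProb T Q d s xs as else 0

/-- `P^η_{(s,𝟏)}(X_t = x, Z_t = z, A_t = a)`, the marginal (occupation measure for `t < T`)
in the augmented model. -/
noncomputable def PmargBar {X A : Type*} [Fintype X] [Fintype A] [DecidableEq X] [DecidableEq A]
    (T K : ℕ) (Q : X → A → X → ℝ) (f : ℕ → Fin (K + 1) → X → A → X → ℝ)
    (dbar : Fin T → X × ZVec K → A → ℝ) (s : X)
    (t : Fin T) (xz : X × ZVec K) (a : A) : ℝ :=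
  ∑ xzs : Fin (T + 1) → X × ZVec K, ∑ as : Fin T → A,
    if xzs t.castSucc = xz ∧ as t = a then trajProbBar T K Q f dbar s xzs as else 0

/-- `P^η_{(s,𝟏)}(X_T = x, Z_T = z)`, the terminal marginal in the augmented model. -/
noncomputable def PmargBarT {X A : Type*} [Fintype X] [Fintype A] [DecidableEq X] [DecidableEq A]
    (T K : ℕ) (Q : X → A → X → ℝ) (f : ℕ → Fin (K + 1) → X → A → X → ℝ)
    (dbar : Fin T → X × ZVec K → A → ℝ) (s : X) (xz : X × ZVec K) : ℝ :=
  ∑ xzs : Fin (T + 1) → X × ZVec K, ∑ as : Fin T → A,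
    if xzs (Fin.last T) = xz then trajProbBar T K Q f dbar s xzs as else 0

/-- `d` is a Markov randomized policy: each `d_t(·|x)` is a probability distribution on `A`. -/
def IsMR {S A : Type*} [Fintype A] {T : ℕ} (d : Fin T → S → A → ℝ) : Prop :=
  ∀ (t : Fin T) (x : S), (∀ a : A, 0 ≤ d t x a) ∧ ∑ a : A, d t x a = 1

/-- An augmented policy is indifferent to the augmented component `z`. -/
def Indiff {X A : Type*} {T K : ℕ} (dbar : Fin T → X × ZVec K → A → ℝ) : Prop :=
  ∀ (t : Fin T) (x : X) (z : ZVec K) (a : A), dbar t (x, z) a = dbar t (x, oneVec K) a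

/-- The projection `Γ` of an augmented policy to a policy of the original model. -/
def Gamma {X A : Type*} {T K : ℕ} (dbar : Fin T → X × ZVec K → A → ℝ) :
    Fin T → X → A → ℝ := fun t x a => dbar t (x, oneVec K) a

/-- Stage-wise cost `r̄_{t,i}((x,z),a) = Σ_{x'} r_{t,i}(x,a,x') Q(x'|x,a)` of the augmented
model (it does not depend on `z`). -/
noncomputable def rbar {X A : Type*} [Fintype X] {K : ℕ}
    (Q : X → A → X → ℝ) (r : ℕ → Fin (K + 1) → X → A → X → ℝ)
    (t : ℕ) (i : Fin (K + 1)) (x : X) (a : A) : ℝ :=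
  ∑ x' : X, r t i x a x' * Q x a x'

/-- Combined additive-plus-multiplicative cost
`w^π_i(s) = E^π_s[Σ_t r_{t,i}(X_t,A_t,X_{t+1}) + α_i ∏_t f_{t,i}(X_t,A_t,X_{t+1})]`. -/
noncomputable def wcost {X A : Type*} [Fintype X] [Fintype A] [DecidableEq X] {K : ℕ}
    (T : ℕ) (Q : X → A → X → ℝ)
    (r f : ℕ → Fin (K + 1) → X → A → X → ℝ) (α : Fin (K + 1) → ℝ)
    (d : Fin T → X → A → ℝ) (s : X) (i : Fin (K + 1)) : ℝ :=
  ∑ xs : Fin (T + 1) → X, ∑ as : Fin T → A,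
    trajProb T Q d s xs as *
      ((∑ t : Fin T, r t i (xs t.castSucc) (as t) (xs t.succ)) +
        α i * ∏ t : Fin T, f t i (xs t.castSucc) (as t) (xs t.succ))

/-- Total expected cost in the augmented model
`w̄^η_i(s,𝟏) = E^η_{(s,𝟏)}[Σ_t r̄_{t,i}((X_t,Z_t),A_t) + α_i Z_{T,i}]`. -/
noncomputable def wbarcost {X A : Type*} [Fintype X] [Fintype A] [DecidableEq X]
    (T K : ℕ) (Q : X → A → X → ℝ)
    (f r : ℕ → Fin (K + 1) → X → A → X → ℝ) (α : Fin (K + 1) → ℝ)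
    (dbar : Fin T → X × ZVec K → A → ℝ) (s : X) (i : Fin (K + 1)) : ℝ :=
  ∑ xzs : Fin (T + 1) → X × ZVec K, ∑ as : Fin T → A,
    trajProbBar T K Q f dbar s xzs as *
      ((∑ t : Fin T, rbar Q r t i (xzs t.castSucc).1 (as t)) +
        α i * (((xzs (Fin.last T)).2 i : ℕ) : ℝ))

/-- The BLP linear functional: `Σ_{t<T} Σ_{(x,z),a} r̄_{t,i}((x,z),a) w_t((x,z),a)
+ Σ_{(x,z)} α_i z_i w_T(x,z)`. -/
noncomputable def BLPlin {X A : Type*} [Fintype X] [Fintype A] (T K : ℕ)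
    (Q : X → A → X → ℝ) (r : ℕ → Fin (K + 1) → X → A → X → ℝ) (α : Fin (K + 1) → ℝ)
    (i : Fin (K + 1)) (w : Fin T → X × ZVec K → A → ℝ) (wT : X × ZVec K → ℝ) : ℝ :=
  (∑ t : Fin T, ∑ xz : X × ZVec K, ∑ a : A, rbar Q r t i xz.1 a * w t xz a) +
    ∑ xz : X × ZVec K, α i * (((xz.2 i : ℕ)) : ℝ) * wT xz

/-- The feasible region `𝒬` of the bilinear program. -/
def BLPFeasible {X A : Type*} [Fintype X] [Fintype A] [DecidableEq X] (T K : ℕ) (hT : 1 ≤ T)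
    (Q : X → A → X → ℝ) (f r : ℕ → Fin (K + 1) → X → A → X → ℝ)
    (α b : Fin (K + 1) → ℝ) (s : X)
    (w : Fin T → X × ZVec K → A → ℝ) (wT : X × ZVec K → ℝ) : Prop :=
  (∀ (t : Fin T) (xz : X × ZVec K) (a : A), 0 ≤ w t xz a) ∧
  (∀ xz : X × ZVec K, 0 ≤ wT xz) ∧
  (∀ xz : X × ZVec K,
    ∑ a : A, w ⟨0, hT⟩ xz a = if xz = (s, oneVec K) then 1 else 0) ∧
  (∀ t : Fin T, 1 ≤ (t : ℕ) → ∀ xz : X × ZVec K,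
    ∑ a : A, w t xz a =
      ∑ xz' : X × ZVec K, ∑ a : A, Qbar K Q f t xz'.1 xz'.2 a xz.1 xz.2 *
        w ⟨(t : ℕ) - 1, lt_of_le_of_lt (Nat.sub_le _ _) t.isLt⟩ xz' a) ∧
  (∀ xz : X × ZVec K,
    wT xz = ∑ xz' : X × ZVec K, ∑ a : A, Qbar K Q f T xz'.1 xz'.2 a xz.1 xz.2 *
      w ⟨T - 1, by omega⟩ xz' a) ∧
  (∀ i : Fin (K + 1), 1 ≤ (i : ℕ) → BLPlin T K Q r α i w wT ≤ b i) ∧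
  (∀ (t : Fin T) (x : X) (z : ZVec K) (a : A),
    w t (x, z) a * (∑ a' : A, w t (x, oneVec K) a') =
      w t (x, oneVec K) a * (∑ a' : A, w t (x, z) a'))

noncomputable def Mker {K : ℕ} (c : Fin (K + 1) → ℝ) (z z' : ZVec K) : ℝ :=
  if ∃ i, z i = 0 ∧ z' i = 1 then 0 else ∏ i, rho (c i) (z i) (z' i)

lemma Mker_eq_prod {K : ℕ} (c : Fin (K + 1) → ℝ) (z z' : ZVec K) :
    Mker c z z' = ∏ i, (if z i = 0 ∧ z' i = 1 then 0 else rho (c i) (z i) (z' i)) := by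
  unfold Mker
  split_ifs with h
  · obtain ⟨i, hi⟩ := h
    rw [eq_comm]
    apply Finset.prod_eq_zero (Finset.mem_univ i)
    simp [hi]
  · push_neg at h
    apply Finset.prod_congr rfl
    intro i _
    rw [if_neg]
    rintro ⟨h1, h2⟩
    exact absurd h2 (h i h1)

lemma Mker_row_sum {K : ℕ} (c : Fin (K + 1) → ℝ) (z : ZVec K) :
    ∑ z' : ZVec K, Mker c z z' = 1 := by
  have := Finset.prod_univ_sum (fun _ : Fin (K+1) => (Finset.univ : Finset (Fin 2)))
    (fun i b => if z i = 0 ∧ b = 1 then (0:ℝ) else rho (c i) (z i) b)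
  rw [show (1:ℝ) = ∏ i : Fin (K+1), ∑ b : Fin 2,
      (if z i = 0 ∧ b = 1 then (0:ℝ) else rho (c i) (z i) b) by
    rw [eq_comm]
    apply Finset.prod_eq_one
    intro i _
    have hz : z i = 0 ∨ z i = 1 := by omega
    rcases hz with h | h <;> simp [h, Fin.sum_univ_two, rho] <;> ring]
  rw [this]
  rw [eq_comm]
  apply Fintype.sum_equiv (Equiv.refl _)
  intro z'
  rw [Mker_eq_prod]
  rfl
lemma path_sum {Z : Type*} [Fintype Z] [DecidableEq Z] :
    ∀ (n : ℕ) (M : Fin n → Z → Z → ℝ), (∀ t z, ∑ z', M t z z' = 1) → ∀ z0 : Z,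
      ∑ zs : Fin (n + 1) → Z, (if zs 0 = z0 then (1:ℝ) else 0) *
        ∏ t : Fin n, M t (zs t.castSucc) (zs t.succ) = 1 := by
  intro n
  induction n with
  | zero =>
    intro M _ z0
    rw [Fintype.sum_equiv (Equiv.funUnique (Fin 1) Z)
      _ (fun z => if z = z0 then (1:ℝ) else 0)]
    · simp
    · intro zs; simp [Equiv.funUnique]
  | succ n ih =>
    intro M hM z0
    rw [← Equiv.sum_comp (Fin.consEquiv (fun _ : Fin (n+2) => Z)), Fintype.sum_prod_type]
    have hcons : ∀ (z1 : Z) (rest : Fin (n+1) → Z),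
        (Fin.consEquiv (fun _ : Fin (n+2) => Z)) (z1, rest) = Fin.cons z1 rest := by
      intro z1 rest
      funext i
      induction i using Fin.cases <;> simp [Fin.consEquiv]
    simp only [hcons]
    have hterm : ∀ (z1 : Z) (rest : Fin (n+1) → Z),
        (if (Fin.cons z1 rest : Fin (n+2) → Z) 0 = z0 then (1:ℝ) else 0) *
          ∏ t : Fin (n+1), M t ((Fin.cons z1 rest : Fin (n+2) → Z) t.castSucc)
            ((Fin.cons z1 rest : Fin (n+2) → Z) t.succ)
        = (if z1 = z0 then (1:ℝ) else 0) *
          (M 0 z1 (rest 0) *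
            ∏ t : Fin n, M t.succ (rest t.castSucc) (rest t.succ)) := by
      intro z1 rest
      rw [Fin.prod_univ_succ]
      congr 2
      all_goals simp
    simp only [hterm]
    have hswap : ∀ z1 : Z, ∑ rest : Fin (n+1) → Z,
        (if z1 = z0 then (1:ℝ) else 0) *
          (M 0 z1 (rest 0) * ∏ t : Fin n, M t.succ (rest t.castSucc) (rest t.succ))
        = (if z1 = z0 then (1:ℝ) else 0) * ∑ w : Z, M 0 z1 w := by
      intro z1
      rw [← Finset.mul_sum]
      congr 1
      have insert1 : ∀ (g : (Fin (n+1) → Z) → ℝ),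
          ∑ rest : Fin (n+1) → Z, g rest
          = ∑ w : Z, ∑ rest : Fin (n+1) → Z, (if rest 0 = w then (1:ℝ) else 0) * g rest := by
        intro g
        rw [Finset.sum_comm]
        apply Finset.sum_congr rfl
        intro rest _
        rw [← Finset.sum_mul]
        simp
      rw [insert1]
      apply Finset.sum_congr rfl
      intro w _
      have : ∑ rest : Fin (n+1) → Z,
          (if rest 0 = w then (1:ℝ) else 0) *
            (M 0 z1 (rest 0) * ∏ t : Fin n, M t.succ (rest t.castSucc) (rest t.succ))
          = M 0 z1 w * ∑ rest : Fin (n+1) → Z,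
            (if rest 0 = w then (1:ℝ) else 0) *
              ∏ t : Fin n, M t.succ (rest t.castSucc) (rest t.succ) := by
        rw [Finset.mul_sum]
        apply Finset.sum_congr rfl
        intro rest _
        split_ifs with h
        · rw [h]; ring
        · ring
      rw [this, ih (fun t => M t.succ) (fun t z => hM t.succ z) w, mul_one]
    simp only [hswap, hM]
    simp

lemma Qbar_eq_mul {X A : Type*} (K : ℕ) (Q : X → A → X → ℝ)
    (f : ℕ → Fin (K + 1) → X → A → X → ℝ) (t : ℕ) (x : X) (z : ZVec K) (a : A)
    (x' : X) (z' : ZVec K) :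
    Qbar K Q f t x z a x' z' = Q x a x' * Mker (fun i => f (t - 1) i x a x') z z' := by
  unfold Qbar Mker
  split_ifs <;> ring

lemma key_sum_z {X A : Type*} [Fintype X] [Fintype A] [DecidableEq X]
    (T K : ℕ) (Q : X → A → X → ℝ) (f : ℕ → Fin (K + 1) → X → A → X → ℝ)
    (dbar : Fin T → X × ZVec K → A → ℝ) (hind : Indiff dbar) (s : X)
    (xs : Fin (T + 1) → X) (as : Fin T → A) :
    ∑ zs : Fin (T + 1) → ZVec K,
      trajProbBar T K Q f dbar s (fun i => (xs i, zs i)) as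
      = trajProb T Q (Gamma dbar) s xs as := by
  unfold trajProbBar trajProb
  have hterm : ∀ zs : Fin (T + 1) → ZVec K,
      (if ((xs 0, zs 0) : X × ZVec K) = (s, oneVec K) then (1:ℝ) else 0) *
        ∏ t : Fin T, dbar t (xs t.castSucc, zs t.castSucc) (as t) *
          Qbar K Q f ((t : ℕ) + 1) (xs t.castSucc) (zs t.castSucc) (as t)
            (xs t.succ) (zs t.succ)
      = ((if xs 0 = s then (1:ℝ) else 0) *
          ∏ t : Fin T, Gamma dbar t (xs t.castSucc) (as t) *
            Q (xs t.castSucc) (as t) (xs t.succ)) *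
        ((if zs 0 = oneVec K then (1:ℝ) else 0) *
          ∏ t : Fin T, Mker (fun i => f ((t : ℕ) + 1 - 1) i (xs t.castSucc) (as t) (xs t.succ))
            (zs t.castSucc) (zs t.succ)) := by
    intro zs
    have h1 : (if ((xs 0, zs 0) : X × ZVec K) = (s, oneVec K) then (1:ℝ) else 0)
        = (if xs 0 = s then (1:ℝ) else 0) * (if zs 0 = oneVec K then (1:ℝ) else 0) := by
      simp only [Prod.ext_iff, ite_and]
      split_ifs <;> simp
    have h2 : ∀ t : Fin T,
        dbar t (xs t.castSucc, zs t.castSucc) (as t) *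
          Qbar K Q f ((t : ℕ) + 1) (xs t.castSucc) (zs t.castSucc) (as t)
            (xs t.succ) (zs t.succ)
        = (Gamma dbar t (xs t.castSucc) (as t) * Q (xs t.castSucc) (as t) (xs t.succ)) *
          Mker (fun i => f ((t : ℕ) + 1 - 1) i (xs t.castSucc) (as t) (xs t.succ))
            (zs t.castSucc) (zs t.succ) := by
      intro t
      rw [Qbar_eq_mul, hind t (xs t.castSucc) (zs t.castSucc) (as t)]
      unfold Gamma
      ring
    rw [h1]
    rw [Finset.prod_congr rfl (fun t _ => h2 t), Finset.prod_mul_distrib]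
    ring
  simp only [hterm]
  rw [← Finset.mul_sum,
    path_sum T (fun t => Mker (fun i => f ((t : ℕ) + 1 - 1) i (xs t.castSucc) (as t) (xs t.succ)))
      (fun t z => Mker_row_sum _ z) (oneVec K), mul_one]
/-- For an augmented policy `η ∈ Π̄` with projection `Γ(η)`, for every `0 ≤ t ≤ T-1`,
`x ∈ 𝒳` and `a ∈ 𝒜`:
`Σ_{z ∈ 𝒵} P^η_{(s,𝟏)}(X_t = x, Z_t = z, A_t = a) = P^{Γ(η)}_s(X_t = x, A_t = a)`. -/
theorem margBar_sum_z_eq_marg {X A : Type*} [Fintype X] [Fintype A] [Nonempty X] [Nonempty A]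
    [DecidableEq X] [DecidableEq A]
    (T K : ℕ) (hT : 1 ≤ T)
    (Q : X → A → X → ℝ)
    (hQnn : ∀ x a x', 0 ≤ Q x a x') (hQle : ∀ x a x', Q x a x' ≤ 1)
    (hQsum : ∀ x a, ∑ x' : X, Q x a x' = 1)
    (f : ℕ → Fin (K + 1) → X → A → X → ℝ)
    (hf : ∀ t, t ≤ T - 1 → ∀ i x a x', 0 ≤ f t i x a x' ∧ f t i x a x' ≤ 1)
    (s : X)
    (dbar : Fin T → X × ZVec K → A → ℝ)
    (hmr : IsMR dbar) (hind : Indiff dbar)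
    (t : Fin T) (x : X) (a : A) :
    ∑ z : ZVec K, PmargBar T K Q f dbar s t (x, z) a =
      Pmarg T Q (Gamma dbar) s t x a := by
  unfold PmargBar Pmarg
  rw [Finset.sum_comm]
  have step1 : ∀ xzs : Fin (T + 1) → X × ZVec K,
      ∑ z : ZVec K, ∑ as : Fin T → A,
        (if xzs t.castSucc = (x, z) ∧ as t = a
          then trajProbBar T K Q f dbar s xzs as else 0)
      = ∑ as : Fin T → A,
        (if (xzs t.castSucc).1 = x ∧ as t = a
          then trajProbBar T K Q f dbar s xzs as else 0) := by
    intro xzs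
    rw [Finset.sum_comm]
    apply Finset.sum_congr rfl
    intro as _
    have hc : ∀ z : ZVec K, (xzs t.castSucc = (x, z) ∧ as t = a)
        ↔ (((xzs t.castSucc).1 = x ∧ as t = a) ∧ (xzs t.castSucc).2 = z) := by
      intro z
      rw [Prod.ext_iff]
      tauto
    by_cases h1 : (xzs t.castSucc).1 = x
    · by_cases h2 : as t = a
      · simp only [h2, and_true]
        have hc2 : ∀ z : ZVec K, (xzs t.castSucc = (x, z)) ↔ ((xzs t.castSucc).2 = z) := by
          intro z
          rw [Prod.ext_iff]
          simp [h1]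
        simp only [hc2, h1, if_true, true_and]
        rw [Finset.sum_ite_eq]
        simp
      · simp [hc, h2]
    · simp [hc, h1]
  rw [Finset.sum_congr rfl (fun xzs _ => step1 xzs)]
  rw [← Equiv.sum_comp (Equiv.arrowProdEquivProdArrow (Fin (T+1)) (fun _ => X) (fun _ => ZVec K)).symm,
    Fintype.sum_prod_type]
  apply Finset.sum_congr rfl
  intro xs _
  rw [Finset.sum_comm]
  apply Finset.sum_congr rfl
  intro as _
  have : ∀ zs : Fin (T+1) → ZVec K,
      (if (((Equiv.arrowProdEquivProdArrow (Fin (T+1)) (fun _ => X) (fun _ => ZVec K)).symm (xs, zs))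
          t.castSucc).1 = x ∧ as t = a
        then trajProbBar T K Q f dbar s
          ((Equiv.arrowProdEquivProdArrow (Fin (T+1)) (fun _ => X) (fun _ => ZVec K)).symm (xs, zs)) as else 0)
      = (if xs t.castSucc = x ∧ as t = a
        then trajProbBar T K Q f dbar s (fun i => (xs i, zs i)) as else 0) := by
    intro zs
    rfl
  rw [Finset.sum_congr rfl (fun zs _ => this zs)]
  split_ifs with h
  · exact key_sum_z T K Q f dbar hind s xs as
  · simp
end

section
/- Let η ∈ Π̄ with projection Γ(η) ∈ Π_MR, and fix 0 ≤ i ≤ K. Then Σ_{t=0}^{T-1} E^η_{(s,𝟏)}[ r̄_{t,i}((X_t,Z_t),A_t) ] = E^{Γ(η)}_s[ Σ_{t=0}^{T-1} r_{t,i}(X_t,A_t,X_{t+1}) ]. -/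
open Finset

set_option linter.unusedSectionVars false
set_option maxHeartbeats 1000000

section Chain

variable {S A : Type*} [Fintype S] [Fintype A] [DecidableEq S]

noncomputable def chainSum (n : ℕ) (W : Fin n → S → A → S → ℝ) (s : S)
    (g : (Fin (n + 1) → S) → (Fin n → A) → ℝ) : ℝ :=
  ∑ xs : Fin (n + 1) → S, ∑ as : Fin n → A,
    (if xs 0 = s then (1:ℝ) else 0) *
      (∏ t : Fin n, W t (xs t.castSucc) (as t) (xs t.succ)) * g xs as

lemma sum_pi_succ {α : Type*} [Fintype α] {n : ℕ} (F : (Fin (n + 1) → α) → ℝ) :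
    ∑ xs : Fin (n + 1) → α, F xs = ∑ x0 : α, ∑ xs : Fin n → α, F (Fin.cons x0 xs) := by
  rw [← Equiv.sum_comp (Fin.consEquiv (fun _ => α)) F, Fintype.sum_prod_type]
  rfl

lemma cons_succ_castSucc {α : Type*} {n : ℕ} (x0 : α) (xs : Fin (n + 1) → α) (t : Fin n) :
    (Fin.cons x0 xs : Fin (n + 2) → α) t.succ.castSucc = xs t.castSucc := by
  rw [← Fin.succ_castSucc, Fin.cons_succ]

lemma chainSum_succ {n : ℕ} (W : Fin (n + 1) → S → A → S → ℝ) (s : S)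
    (g : (Fin (n + 2) → S) → (Fin (n + 1) → A) → ℝ) :
    chainSum (n + 1) W s g =
      ∑ a0 : A, ∑ x1 : S, W 0 s a0 x1 *
        chainSum n (fun t => W t.succ) x1
          (fun xs as => g (Fin.cons s xs) (Fin.cons a0 as)) := by
  unfold chainSum
  have hA : ∀ (G : (Fin (n + 1) → A) → ℝ),
      ∑ as : Fin (n + 1) → A, G as = ∑ a0 : A, ∑ as : Fin n → A, G (Fin.cons a0 as) :=
    fun G => sum_pi_succ G
  rw [sum_pi_succ]
  simp only [hA, Fin.cons_zero, Fin.cons_succ, Fin.prod_univ_succ, cons_succ_castSucc,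
    Fin.castSucc_zero, Fin.succ_zero_eq_one]
  rw [Finset.sum_eq_single s]
  rotate_left
  · intro b _ hb; simp [hb]
  · intro h; exact absurd (Finset.mem_univ s) h
  simp only [if_pos rfl, one_mul]
  rw [Finset.sum_comm]
  refine Finset.sum_congr rfl fun a0 _ => ?_
  simp only [Finset.mul_sum]
  conv_rhs => rw [Finset.sum_comm]
  refine Finset.sum_congr rfl fun xs _ => ?_
  conv_rhs => rw [Finset.sum_comm]
  refine Finset.sum_congr rfl fun as _ => ?_
  rw [Finset.sum_eq_single (xs 0)]
  · simp [mul_assoc]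
  · intro b _ hb; simp [Ne.symm hb]
  · intro h; exact absurd (Finset.mem_univ _) h

lemma chainSum_zero (W : Fin 0 → S → A → S → ℝ) (s : S)
    (g : (Fin 1 → S) → (Fin 0 → A) → ℝ) :
    chainSum 0 W s g = g (fun _ => s) (fun i => i.elim0) := by
  unfold chainSum
  rw [sum_pi_succ]
  rw [Finset.sum_eq_single s]
  rotate_left
  · intro b _ hb; simp [hb]
  · intro h; exact absurd (Finset.mem_univ s) h
  rw [Fintype.sum_unique (fun xs : Fin 0 → S => _), Fintype.sum_unique]
  have e1 : (Fin.cons s (default : Fin 0 → S) : Fin 1 → S) = (fun _ => s) := by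
    funext i
    refine Fin.cases ?_ (fun j => j.elim0) i
    exact Fin.cons_zero _ _
  have e2 : (default : Fin 0 → A) = (fun i => i.elim0) := by
    funext i; exact i.elim0
  simp [e1, e2]

noncomputable def muChain : (n : ℕ) → (Fin n → S → A → S → ℝ) → S → S → ℝ
  | 0, _, s, x => if x = s then 1 else 0
  | (n+1), W, s, x =>
      ∑ a0 : A, ∑ x1 : S, W 0 s a0 x1 * muChain n (fun t => W t.succ) x1 x

lemma chainSum_last (n : ℕ) (W : Fin n → S → A → S → ℝ) (s : S) (h : S → ℝ) :
    chainSum n W s (fun xs _ => h (xs (Fin.last n))) = ∑ x : S, muChain n W s x * h x := by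
  induction n generalizing s with
  | zero =>
    rw [chainSum_zero]
    simp [muChain]
  | succ n ih =>
    rw [chainSum_succ]
    have : ∀ (x1 : S),
        chainSum n (fun t => W t.succ) x1
          (fun xs as => h ((Fin.cons s xs : Fin (n+2) → S) (Fin.last (n+1)))) =
        ∑ x : S, muChain n (fun t => W t.succ) x1 x * h x := by
      intro x1
      rw [show (fun (xs : Fin (n+1) → S) (as : Fin n → A) =>
          h ((Fin.cons s xs : Fin (n+2) → S) (Fin.last (n+1)))) =
          (fun xs _ => h (xs (Fin.last n))) by
        funext xs as
        rw [← Fin.succ_last, Fin.cons_succ]]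
      exact ih _ _
    simp only [this, muChain]
    simp only [Finset.mul_sum, Finset.sum_mul, mul_assoc]
    conv_rhs => rw [Finset.sum_comm]
    refine Finset.sum_congr rfl fun a0 _ => ?_
    rw [Finset.sum_comm]

lemma chainSum_one (n : ℕ) (W : Fin n → S → A → S → ℝ)
    (hW : ∀ (t : Fin n) (x : S), ∑ a : A, ∑ x' : S, W t x a x' = 1) (s : S) :
    chainSum n W s (fun _ _ => 1) = 1 := by
  induction n generalizing s with
  | zero => rw [chainSum_zero]
  | succ n ih =>
    rw [chainSum_succ]
    simp only [ih (fun t => W t.succ) (fun t x => hW t.succ x), mul_one]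
    exact hW 0 s

lemma chainSum_eval0 (n : ℕ) (W : Fin n → S → A → S → ℝ)
    (hW : ∀ (t : Fin n) (x : S), ∑ a : A, ∑ x' : S, W t x a x' = 1)
    (s : S) (h : S → ℝ) :
    chainSum n W s (fun xs _ => h (xs 0)) = h s := by
  have h1 : chainSum n W s (fun xs _ => h (xs 0)) =
      h s * chainSum n W s (fun _ _ => 1) := by
    unfold chainSum
    simp only [Finset.mul_sum]
    refine Finset.sum_congr rfl fun xs _ => Finset.sum_congr rfl fun as _ => ?_
    by_cases hx : xs 0 = s
    · rw [hx]; ring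
    · simp [hx]
  rw [h1, chainSum_one n W hW s, mul_one]

lemma cons_at_one {α : Type*} {n : ℕ} (x0 : α) (xs : Fin (n + 1) → α) :
    (Fin.cons x0 xs : Fin (n + 2) → α) 1 = xs 0 := by
  rw [← Fin.succ_zero_eq_one, Fin.cons_succ]

lemma castLE_succ' {n m : ℕ} (h : n + 1 ≤ m + 1) (t : Fin n) :
    Fin.castLE h t.succ = (Fin.castLE (by omega : n ≤ m) t).succ := by
  ext; simp

lemma chainSum_step (n : ℕ) (W : Fin n → S → A → S → ℝ)
    (hW : ∀ (t : Fin n) (x : S), ∑ a : A, ∑ x' : S, W t x a x' = 1)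
    (s : S) (k : Fin n) (G : S → A → S → ℝ) :
    chainSum n W s (fun xs as => G (xs k.castSucc) (as k) (xs k.succ)) =
      ∑ x : S, ∑ a : A, ∑ x' : S,
        muChain (k : ℕ) (fun t => W (t.castLE k.isLt.le)) s x * W k x a x' * G x a x' := by
  induction n generalizing s with
  | zero => exact k.elim0
  | succ n ih =>
    refine Fin.cases ?_ ?_ k
    · -- k = 0
      rw [chainSum_succ]
      simp only [Fin.castSucc_zero, Fin.succ_zero_eq_one, Fin.cons_zero, cons_at_one]
      have heval : ∀ (a0 : A) (x1 : S),
          chainSum n (fun t => W t.succ) x1 (fun xs _ => G s a0 (xs 0)) = G s a0 x1 :=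
        fun a0 x1 => chainSum_eval0 n _ (fun t x => hW t.succ x) x1 (G s a0)
      simp only [heval, Fin.val_zero, muChain]
      rw [Finset.sum_eq_single s]
      rotate_left
      · intro b _ hb; simp [hb]
      · intro hmem; exact absurd (Finset.mem_univ s) hmem
      simp
    · -- k = j.succ
      intro j
      rw [chainSum_succ]
      have hg : ∀ (a0 : A), (fun (xs : Fin (n+1) → S) (as : Fin n → A) =>
          G ((Fin.cons s xs : Fin (n+2) → S) j.succ.castSucc)
            ((Fin.cons a0 as : Fin (n+1) → A) j.succ)
            ((Fin.cons s xs : Fin (n+2) → S) j.succ.succ)) =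
          (fun xs as => G (xs j.castSucc) (as j) (xs j.succ)) := by
        intro a0
        funext xs as
        rw [cons_succ_castSucc, Fin.cons_succ, Fin.cons_succ]
      have hWs : ∀ (t : Fin n) (x : S), ∑ a : A, ∑ x' : S, W t.succ x a x' = 1 :=
        fun t x => hW t.succ x
      simp only [hg, fun (x1 : S) => ih (fun t => W t.succ) hWs x1 j]
      have hmu : ∀ x : S,
          muChain ((j : ℕ) + 1) (fun t : Fin ((j:ℕ)+1) => W (Fin.castLE j.succ.isLt.le t)) s x =
          ∑ a0 : A, ∑ x1 : S, W 0 s a0 x1 *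
            muChain (j : ℕ) (fun t => W ((Fin.castLE j.isLt.le t).succ)) x1 x :=
        fun x => rfl
      show ∑ a0 : A, ∑ x1 : S, W 0 s a0 x1 *
          ∑ x : S, ∑ a : A, ∑ x' : S,
            muChain (j : ℕ) (fun t => W ((Fin.castLE j.isLt.le t).succ)) x1 x *
              W j.succ x a x' * G x a x' =
        ∑ x : S, ∑ a : A, ∑ x' : S,
          muChain ((j : ℕ) + 1) (fun t : Fin ((j:ℕ)+1) => W (Fin.castLE j.succ.isLt.le t)) s x *
            W j.succ x a x' * G x a x'
      simp only [hmu]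
      have hfac1 : ∀ x1 : S,
          (∑ x : S, ∑ a : A, ∑ x' : S,
            muChain (j : ℕ) (fun t => W ((Fin.castLE j.isLt.le t).succ)) x1 x *
              W j.succ x a x' * G x a x') =
          ∑ x : S, muChain (j : ℕ) (fun t => W ((Fin.castLE j.isLt.le t).succ)) x1 x *
            (∑ a : A, ∑ x' : S, W j.succ x a x' * G x a x') := by
        intro x1
        refine Finset.sum_congr rfl fun x _ => ?_
        simp [Finset.mul_sum, mul_assoc]
      simp only [hfac1]
      have hfac2 :
          (∑ x : S, ∑ a : A, ∑ x' : S,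
            (∑ a0 : A, ∑ x1 : S, W 0 s a0 x1 *
              muChain (j : ℕ) (fun t => W ((Fin.castLE j.isLt.le t).succ)) x1 x) *
              W j.succ x a x' * G x a x') =
          ∑ x : S, (∑ a0 : A, ∑ x1 : S, W 0 s a0 x1 *
              muChain (j : ℕ) (fun t => W ((Fin.castLE j.isLt.le t).succ)) x1 x) *
            (∑ a : A, ∑ x' : S, W j.succ x a x' * G x a x') := by
        refine Finset.sum_congr rfl fun x _ => ?_
        simp [Finset.mul_sum, mul_assoc]
      rw [hfac2]
      simp only [Finset.mul_sum, Finset.sum_mul, mul_assoc]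
      refine Eq.trans
        ((Finset.sum_congr rfl fun a0 _ => Finset.sum_comm).trans Finset.sum_comm)
        (Finset.sum_congr rfl fun x _ => ?_)
      exact ((Finset.sum_congr rfl fun a0 _ => Finset.sum_comm).trans Finset.sum_comm).trans
        (Finset.sum_congr rfl fun a _ =>
          (Finset.sum_congr rfl fun a0 _ => Finset.sum_comm).trans Finset.sum_comm)

end Chain

section Marg

variable {X A Z : Type*} [Fintype X] [Fintype A] [Fintype Z] [DecidableEq X] [DecidableEq Z]

lemma muChain_marg (n : ℕ) (Wb : Fin n → X × Z → A → X × Z → ℝ)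
    (W : Fin n → X → A → X → ℝ)
    (hrel : ∀ (t : Fin n) (x : X) (z : Z) (a : A) (x' : X),
      ∑ z' : Z, Wb t (x, z) a (x', z') = W t x a x') :
    ∀ (x0 : X) (z0 : Z) (x : X),
      ∑ z : Z, muChain n Wb (x0, z0) (x, z) = muChain n W x0 x := by
  induction n with
  | zero =>
    intro x0 z0 x
    show (∑ z : Z, if (x, z) = (x0, z0) then (1:ℝ) else 0) = if x = x0 then 1 else 0
    simp only [Prod.mk.injEq]
    by_cases hx : x = x0
    · simp [hx]
    · simp [hx]
  | succ n ih =>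
    intro x0 z0 x
    show (∑ z : Z, ∑ a0 : A, ∑ xz1 : X × Z, Wb 0 (x0, z0) a0 xz1 *
        muChain n (fun t => Wb t.succ) xz1 (x, z)) =
      ∑ a0 : A, ∑ x1 : X, W 0 x0 a0 x1 * muChain n (fun t => W t.succ) x1 x
    rw [Finset.sum_comm]
    refine Finset.sum_congr rfl fun a0 _ => ?_
    rw [Finset.sum_comm]
    rw [Fintype.sum_prod_type]
    refine Finset.sum_congr rfl fun x1 _ => ?_
    have e1 : ∀ z1 : Z,
        ∑ z : Z, Wb 0 (x0, z0) a0 (x1, z1) * muChain n (fun t => Wb t.succ) (x1, z1) (x, z)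
        = Wb 0 (x0, z0) a0 (x1, z1) * muChain n (fun t => W t.succ) x1 x := by
      intro z1
      rw [← Finset.mul_sum,
        ih (fun t => Wb t.succ) (fun t => W t.succ) (fun t => hrel t.succ) x1 z1 x]
    simp only [e1]
    rw [← Finset.sum_mul, hrel 0 x0 z0 a0 x1]

end Marg

section QbarLemmas

variable {X A : Type*} [Fintype X] [Fintype A] {K : ℕ}

lemma rho_cond_sum (c : ℝ) (zi : Fin 2) :
    ∑ b : Fin 2, (if zi = 0 ∧ b = 1 then (0:ℝ) else rho c zi b) = 1 := by
  fin_cases zi <;> simp [Fin.sum_univ_two, rho] <;> ring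

lemma Qbar_eq_prod (Q : X → A → X → ℝ) (f : ℕ → Fin (K + 1) → X → A → X → ℝ)
    (t : ℕ) (x : X) (z : ZVec K) (a : A) (x' : X) (z' : ZVec K) :
    Qbar K Q f t x z a x' z' =
      Q x a x' * ∏ i, (if z i = 0 ∧ z' i = 1 then (0:ℝ)
        else rho (f (t - 1) i x a x') (z i) (z' i)) := by
  unfold Qbar
  by_cases h : ∃ i, z i = 0 ∧ z' i = 1
  · rw [if_pos h]
    obtain ⟨i, hi⟩ := h
    have hz : (∏ i, (if z i = 0 ∧ z' i = 1 then (0:ℝ)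
        else rho (f (t - 1) i x a x') (z i) (z' i))) = 0 :=
      Finset.prod_eq_zero (Finset.mem_univ i) (if_pos hi)
    rw [hz, mul_zero]
  · rw [if_neg h]
    congr 1
    refine Finset.prod_congr rfl fun i _ => ?_
    rw [if_neg (fun hc => h ⟨i, hc⟩)]

lemma Qbar_sum_z (Q : X → A → X → ℝ) (f : ℕ → Fin (K + 1) → X → A → X → ℝ)
    (t : ℕ) (x : X) (z : ZVec K) (a : A) (x' : X) :
    ∑ z' : ZVec K, Qbar K Q f t x z a x' z' = Q x a x' := by
  simp only [Qbar_eq_prod]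
  rw [← Finset.mul_sum]
  have key := (Fintype.prod_sum (fun (i : Fin (K + 1)) (b : Fin 2) =>
      if z i = 0 ∧ b = 1 then (0:ℝ) else rho (f (t - 1) i x a x') (z i) b)).symm
  simp only [rho_cond_sum, Finset.prod_const_one] at key
  rw [key, mul_one]

end QbarLemmas

noncomputable def WbAux {X A : Type*} (T K : ℕ) (Q : X → A → X → ℝ)
    (f : ℕ → Fin (K + 1) → X → A → X → ℝ) (dbar : Fin T → X × ZVec K → A → ℝ) :
    Fin T → X × ZVec K → A → X × ZVec K → ℝ :=
  fun t xz a xz' => dbar t xz a * Qbar K Q f ((t : ℕ) + 1) xz.1 xz.2 a xz'.1 xz'.2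

noncomputable def WAux {X A : Type*} (T K : ℕ) (Q : X → A → X → ℝ)
    (dbar : Fin T → X × ZVec K → A → ℝ) : Fin T → X → A → X → ℝ :=
  fun t x a x' => dbar t (x, oneVec K) a * Q x a x'

/-- For `η ∈ Π̄` with projection `Γ(η)` and `0 ≤ i ≤ K`:
`Σ_{t=0}^{T-1} E^η_{(s,𝟏)}[r̄_{t,i}((X_t,Z_t),A_t)]
 = E^{Γ(η)}_s[Σ_{t=0}^{T-1} r_{t,i}(X_t,A_t,X_{t+1})]`. -/
theorem expected_stage_costs_eq {X A : Type*} [Fintype X] [Fintype A] [Nonempty X] [Nonempty A]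
    [DecidableEq X] [DecidableEq A]
    (T K : ℕ) (hT : 1 ≤ T)
    (Q : X → A → X → ℝ)
    (hQnn : ∀ x a x', 0 ≤ Q x a x') (hQle : ∀ x a x', Q x a x' ≤ 1)
    (hQsum : ∀ x a, ∑ x' : X, Q x a x' = 1)
    (f : ℕ → Fin (K + 1) → X → A → X → ℝ)
    (hf : ∀ t, t ≤ T - 1 → ∀ i x a x', 0 ≤ f t i x a x' ∧ f t i x a x' ≤ 1)
    (r : ℕ → Fin (K + 1) → X → A → X → ℝ)
    (s : X)
    (dbar : Fin T → X × ZVec K → A → ℝ)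
    (hmr : IsMR dbar) (hind : Indiff dbar)
    (i : Fin (K + 1)) :
    ∑ t : Fin T, (∑ xzs : Fin (T + 1) → X × ZVec K, ∑ as : Fin T → A,
        trajProbBar T K Q f dbar s xzs as * rbar Q r t i (xzs t.castSucc).1 (as t)) =
      ∑ xs : Fin (T + 1) → X, ∑ as : Fin T → A,
        trajProb T Q (Gamma dbar) s xs as *
          ∑ t : Fin T, r t i (xs t.castSucc) (as t) (xs t.succ) := by
  classical
  have hsumWb : ∀ (t : Fin T) (xz : X × ZVec K) (a : A),
      ∑ xz' : X × ZVec K, WbAux T K Q f dbar t xz a xz' = dbar t xz a := by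
    intro t xz a
    rw [Fintype.sum_prod_type]
    have h1 : ∀ x' : X, ∑ z' : ZVec K, WbAux T K Q f dbar t xz a (x', z') =
        dbar t xz a * Q xz.1 a x' := by
      intro x'
      show ∑ z' : ZVec K,
        dbar t xz a * Qbar K Q f ((t : ℕ) + 1) xz.1 xz.2 a x' z' = _
      rw [← Finset.mul_sum, Qbar_sum_z]
    simp only [h1]
    rw [← Finset.mul_sum, hQsum, mul_one]
  have hWbnorm : ∀ (t : Fin T) (xz : X × ZVec K),
      ∑ a : A, ∑ xz' : X × ZVec K, WbAux T K Q f dbar t xz a xz' = 1 := by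
    intro t xz
    simp only [hsumWb]
    exact (hmr t xz).2
  have hWnorm : ∀ (t : Fin T) (x : X),
      ∑ a : A, ∑ x' : X, WAux T K Q dbar t x a x' = 1 := by
    intro t x
    have h1 : ∀ a : A, ∑ x' : X, WAux T K Q dbar t x a x' = dbar t (x, oneVec K) a := by
      intro a
      show ∑ x' : X, dbar t (x, oneVec K) a * Q x a x' = _
      rw [← Finset.mul_sum, hQsum, mul_one]
    simp only [h1]
    exact (hmr t (x, oneVec K)).2
  have hrel : ∀ (t : Fin T) (x : X) (z : ZVec K) (a : A) (x' : X),
      ∑ z' : ZVec K, WbAux T K Q f dbar t (x, z) a (x', z') =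
        WAux T K Q dbar t x a x' := by
    intro t x z a x'
    show ∑ z' : ZVec K, dbar t (x, z) a * Qbar K Q f ((t : ℕ) + 1) x z a x' z' = _
    rw [← Finset.mul_sum, Qbar_sum_z, hind t x z a]
    rfl
  have hR : (∑ xs : Fin (T + 1) → X, ∑ as : Fin T → A,
        trajProb T Q (Gamma dbar) s xs as *
          ∑ t : Fin T, r t i (xs t.castSucc) (as t) (xs t.succ))
      = ∑ t : Fin T, chainSum T (WAux T K Q dbar) s
          (fun xs as => r t i (xs t.castSucc) (as t) (xs t.succ)) := by
    simp only [Finset.mul_sum]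
    exact ((Finset.sum_congr rfl fun xs _ => Finset.sum_comm).trans Finset.sum_comm).trans
      (Finset.sum_congr rfl fun t _ => rfl)
  rw [hR]
  refine Finset.sum_congr rfl fun t _ => ?_
  have hLt : (∑ xzs : Fin (T + 1) → X × ZVec K, ∑ as : Fin T → A,
        trajProbBar T K Q f dbar s xzs as * rbar Q r t i (xzs t.castSucc).1 (as t))
      = chainSum T (WbAux T K Q f dbar) (s, oneVec K)
          (fun xzs as => rbar Q r t i (xzs t.castSucc).1 (as t)) := rfl
  refine hLt.trans ((chainSum_step T (WbAux T K Q f dbar) hWbnorm (s, oneVec K) t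
    (fun xz a _ => rbar Q r ↑t i xz.1 a)).trans ?_)
  rw [chainSum_step T (WAux T K Q dbar) hWnorm s t (fun x a x' => r ↑t i x a x')]
  -- abbreviations for the occupancy measures
  have hL1 : ∀ (xz : X × ZVec K) (a : A),
      (∑ xz' : X × ZVec K,
        muChain (t : ℕ) (fun u => WbAux T K Q f dbar (u.castLE t.isLt.le)) (s, oneVec K) xz *
          WbAux T K Q f dbar t xz a xz' * rbar Q r ↑t i xz.1 a)
      = muChain (t : ℕ) (fun u => WbAux T K Q f dbar (u.castLE t.isLt.le)) (s, oneVec K) xz *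
          dbar t xz a * rbar Q r ↑t i xz.1 a := by
    intro xz a
    calc (∑ xz' : X × ZVec K,
          muChain (t : ℕ) (fun u => WbAux T K Q f dbar (u.castLE t.isLt.le)) (s, oneVec K) xz *
            WbAux T K Q f dbar t xz a xz' * rbar Q r ↑t i xz.1 a)
        = ∑ xz' : X × ZVec K,
            muChain (t : ℕ) (fun u => WbAux T K Q f dbar (u.castLE t.isLt.le)) (s, oneVec K) xz *
              rbar Q r ↑t i xz.1 a * WbAux T K Q f dbar t xz a xz' :=
          Finset.sum_congr rfl fun xz' _ => by ring
      _ = muChain (t : ℕ) (fun u => WbAux T K Q f dbar (u.castLE t.isLt.le)) (s, oneVec K) xz *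
            rbar Q r ↑t i xz.1 a * ∑ xz' : X × ZVec K, WbAux T K Q f dbar t xz a xz' := by
          rw [Finset.mul_sum]
      _ = _ := by rw [hsumWb]; ring
  simp only [hL1]
  rw [Fintype.sum_prod_type]
  refine Finset.sum_congr rfl fun x _ => ?_
  rw [Finset.sum_comm]
  refine Finset.sum_congr rfl fun a _ => ?_
  have hL2 : (∑ z : ZVec K,
        muChain (t : ℕ) (fun u => WbAux T K Q f dbar (u.castLE t.isLt.le)) (s, oneVec K) (x, z) *
          dbar t (x, z) a * rbar Q r ↑t i x a)
      = (∑ z : ZVec K,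
          muChain (t : ℕ) (fun u => WbAux T K Q f dbar (u.castLE t.isLt.le)) (s, oneVec K) (x, z)) *
        (dbar t (x, oneVec K) a * rbar Q r ↑t i x a) := by
    rw [Finset.sum_mul]
    refine Finset.sum_congr rfl fun z _ => ?_
    rw [hind t x z a]
    ring
  rw [hL2]
  rw [muChain_marg (t : ℕ) (fun u => WbAux T K Q f dbar (u.castLE t.isLt.le))
    (fun u => WAux T K Q dbar (u.castLE t.isLt.le))
    (fun u => hrel (u.castLE t.isLt.le)) s (oneVec K) x]
  have hR2 : (∑ x' : X,
        muChain (t : ℕ) (fun u => WAux T K Q dbar (u.castLE t.isLt.le)) s x *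
          WAux T K Q dbar t x a x' * r ↑t i x a x')
      = muChain (t : ℕ) (fun u => WAux T K Q dbar (u.castLE t.isLt.le)) s x *
          (dbar t (x, oneVec K) a * rbar Q r ↑t i x a) := by
    show (∑ x' : X,
        muChain (t : ℕ) (fun u => WAux T K Q dbar (u.castLE t.isLt.le)) s x *
          (dbar t (x, oneVec K) a * Q x a x') * r ↑t i x a x') = _
    rw [show rbar Q r ↑t i x a = ∑ x' : X, r ↑t i x a x' * Q x a x' from rfl]
    rw [Finset.mul_sum, Finset.mul_sum]
    refine Finset.sum_congr rfl fun x' _ => by ring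
  rw [hR2]
end

section
/- Let η ∈ Π̄ with projection Γ(η) ∈ Π_MR, and fix 0 ≤ i ≤ K. Then P^η_{(s,𝟏)}(Z_{T,i} = 1) = E^{Γ(η)}_s[ ∏_{t=0}^{T-1} f_{t,i}(X_t, A_t, X_{t+1}) ], where Z_{T,i} denotes the i-th coordinate of the augmented component at the terminal time T. -/
open Finset

-- Auxiliary lemmas
noncomputable def step (c : ℝ) (z z' : Fin 2) : ℝ :=
  if z = 0 then (if z' = 1 then 0 else 1) else (if z' = 1 then c else 1 - c)

lemma fin2_cases (v : Fin 2) : v = 0 ∨ v = 1 := by omega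

lemma Qbar_eq_prod_step {X A : Type*} (K : ℕ) (Q : X → A → X → ℝ)
    (f : ℕ → Fin (K+1) → X → A → X → ℝ) (t : ℕ) (x : X) (z : ZVec K) (a : A)
    (x' : X) (z' : ZVec K) :
    Qbar K Q f t x z a x' z' = Q x a x' * ∏ j, step (f (t-1) j x a x') (z j) (z' j) := by
  unfold Qbar
  split_ifs with h
  · obtain ⟨j, hj0, hj1⟩ := h
    rw [Finset.prod_eq_zero (Finset.mem_univ j) (by simp [step, hj0, hj1]), mul_zero]
  · congr 1
    refine Finset.prod_congr rfl fun j _ => ?_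
    have hj : ¬ (z j = 0 ∧ z' j = 1) := fun hc => h ⟨j, hc⟩
    rcases fin2_cases (z j) with h1 | h1 <;> rcases fin2_cases (z' j) with h2 | h2 <;>
      simp_all [rho, step]


lemma chain_sum (T : ℕ) (c : Fin T → ℝ) (w : Fin 2 → ℝ) (v : Fin 2) :
    ∑ p : Fin (T+1) → Fin 2,
      (if p 0 = v then 1 else 0) *
        (∏ t : Fin T, step (c t) (p t.castSucc) (p t.succ)) * w (p (Fin.last T)) =
      if v = 1 then (∏ t, c t) * w 1 + (1 - ∏ t, c t) * w 0 else w 0 := by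
  induction T generalizing v with
  | zero =>
    rw [← Equiv.sum_comp (Equiv.funUnique (Fin 1) (Fin 2)).symm]
    rcases fin2_cases v with h | h <;> simp [h, Fin.sum_univ_two, Fin.last,
      Equiv.funUnique]
  | succ T ih =>
    rw [← Equiv.sum_comp (Fin.consEquiv (fun _ : Fin (T+2) => Fin 2)), Fintype.sum_prod_type]
    simp only [Fin.consEquiv_apply]
    have key : ∀ (v0 : Fin 2) (q : Fin (T+1) → Fin 2),
        (if Fin.cons (α := fun _ => Fin 2) v0 q 0 = v then (1:ℝ) else 0) *
          (∏ t : Fin (T+1), step (c t) (Fin.cons (α := fun _ => Fin 2) v0 q t.castSucc)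
            (Fin.cons (α := fun _ => Fin 2) v0 q t.succ)) *
          w (Fin.cons (α := fun _ => Fin 2) v0 q (Fin.last (T+1))) =
        (if v0 = v then 1 else 0) *
          (step (c 0) v0 (q 0) *
            ((∏ t : Fin T, step (c t.succ) (q t.castSucc) (q t.succ)) * w (q (Fin.last T)))) := by
      intro v0 q
      rw [Fin.prod_univ_succ]
      have h1 : ∀ t : Fin T, (Fin.cons (α := fun _ => Fin 2) v0 q (t.succ.castSucc) : Fin 2)
          = q t.castSucc := by
        intro t; rw [← Fin.succ_castSucc, Fin.cons_succ]
      have h2 : Fin.cons (α := fun _ => Fin 2) v0 q (Fin.last (T+1)) = q (Fin.last T) := by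
        rw [← Fin.succ_last, Fin.cons_succ]
      simp only [Fin.cons_zero, Fin.cons_succ, h1, h2, Fin.castSucc_zero]
      ring
    simp only [key]
    have collapse : ∀ g : Fin 2 → ℝ,
        (∑ v0 : Fin 2, (if v0 = v then (1:ℝ) else 0) * g v0) = g v := by
      intro g
      rw [Fin.sum_univ_two]
      rcases fin2_cases v with h | h <;> simp [h]
    simp only [← Finset.mul_sum]
    rw [collapse]
    have e1 : ∀ (u : Fin 2) (b : ℝ), step (c 0) v u * b =
        ∑ v' : Fin 2, step (c 0) v v' * ((if u = v' then 1 else 0) * b) := by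
      intro u b
      rcases fin2_cases u with h | h <;> simp [h, Fin.sum_univ_two]
    rw [Finset.sum_congr rfl (fun q _ => e1 (q 0)
      ((∏ t : Fin T, step (c t.succ) (q t.castSucc) (q t.succ)) * w (q (Fin.last T)))),
      Finset.sum_comm]
    simp only [← Finset.mul_sum]
    have hih : ∀ v' : Fin 2,
        (∑ q : Fin (T+1) → Fin 2, (if q 0 = v' then (1:ℝ) else 0) *
          ((∏ t : Fin T, step (c t.succ) (q t.castSucc) (q t.succ)) * w (q (Fin.last T)))) =
        if v' = 1 then (∏ t : Fin T, c t.succ) * w 1 + (1 - ∏ t : Fin T, c t.succ) * w 0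
        else w 0 := by
      intro v'
      rw [← ih (fun t => c t.succ) v']
      exact Finset.sum_congr rfl fun q _ => by ring
    simp only [hih]
    rw [Fin.sum_univ_two, Fin.prod_univ_succ]
    rcases fin2_cases v with h | h <;> subst h <;> simp [step] <;> ring

lemma zsum (T K : ℕ) (c : Fin T → Fin (K+1) → ℝ) (i : Fin (K+1)) :
    (∑ zs : Fin (T+1) → ZVec K,
      (if zs 0 = oneVec K then (1:ℝ) else 0) * (if zs (Fin.last T) i = 1 then 1 else 0) *
        ∏ j, ∏ t : Fin T, step (c t j) (zs t.castSucc j) (zs t.succ j)) =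
      ∏ t, c t i := by
  set w : Fin (K+1) → Fin 2 → ℝ :=
    fun j v => if j = i then (if v = 1 then 1 else 0) else 1 with hw
  rw [← Equiv.sum_comp (Equiv.piComm (fun (_ : Fin (K+1)) (_ : Fin (T+1)) => Fin 2))]
  show (∑ ps : Fin (K+1) → Fin (T+1) → Fin 2,
      (if (fun j => ps j 0) = oneVec K then (1:ℝ) else 0) *
        (if ps i (Fin.last T) = 1 then 1 else 0) *
        ∏ j, ∏ t : Fin T, step (c t j) (ps j t.castSucc) (ps j t.succ)) = ∏ t, c t i
  have body : ∀ ps : Fin (K+1) → Fin (T+1) → Fin 2,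
      ((if (fun j => ps j 0) = oneVec K then (1:ℝ) else 0) *
        (if ps i (Fin.last T) = 1 then 1 else 0) *
        ∏ j, ∏ t : Fin T, step (c t j) (ps j t.castSucc) (ps j t.succ)) =
      ∏ j, ((if ps j 0 = 1 then (1:ℝ) else 0) *
        (∏ t : Fin T, step (c t j) (ps j t.castSucc) (ps j t.succ)) * w j (ps j (Fin.last T))) := by
    intro ps
    have h0 : (if (fun j => ps j 0) = oneVec K then (1:ℝ) else 0) =
        ∏ j, (if ps j 0 = 1 then (1:ℝ) else 0) := by
      by_cases h : (fun j => ps j 0) = oneVec K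
      · rw [if_pos h, Finset.prod_eq_one]
        intro j _
        exact if_pos (congrFun h j)
      · rw [if_neg h]
        have hex : ∃ j, ¬ ps j 0 = 1 := by
          by_contra hc
          push_neg at hc
          exact h (funext fun j => hc j)
        obtain ⟨j, hj⟩ := hex
        exact (Finset.prod_eq_zero (Finset.mem_univ j) (by rw [if_neg hj])).symm
    have h1 : (if ps i (Fin.last T) = 1 then (1:ℝ) else 0) =
        ∏ j, w j (ps j (Fin.last T)) := by
      rw [hw]
      rw [Finset.prod_ite_eq' Finset.univ i
        (fun j => if ps j (Fin.last T) = 1 then (1:ℝ) else 0)]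
      simp
    rw [h0, h1, Finset.prod_mul_distrib, Finset.prod_mul_distrib]
    ring
  rw [Finset.sum_congr rfl (fun ps _ => body ps), ← Fintype.piFinset_univ,
    ← Finset.prod_univ_sum (fun _ : Fin (K+1) => (Finset.univ : Finset (Fin (T+1) → Fin 2)))
      (fun j p => (if p 0 = 1 then (1:ℝ) else 0) *
        (∏ t : Fin T, step (c t j) (p t.castSucc) (p t.succ)) * w j (p (Fin.last T)))]
  have each : ∀ j : Fin (K+1),
      (∑ p : Fin (T+1) → Fin 2, (if p 0 = 1 then (1:ℝ) else 0) *
        (∏ t : Fin T, step (c t j) (p t.castSucc) (p t.succ)) * w j (p (Fin.last T))) =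
      if j = i then ∏ t, c t i else 1 := by
    intro j
    rw [chain_sum T (fun t => c t j) (w j) 1]
    by_cases h : j = i
    · subst h; simp [hw]
    · simp [hw, h]
  rw [Finset.prod_congr rfl (fun j _ => each j),
    Finset.prod_ite_eq' Finset.univ i (fun _ => ∏ t, c t i)]
  simp

/-- For `η ∈ Π̄` with projection `Γ(η)` and `0 ≤ i ≤ K`:
`P^η_{(s,𝟏)}(Z_{T,i} = 1) = E^{Γ(η)}_s[∏_{t=0}^{T-1} f_{t,i}(X_t,A_t,X_{t+1})]`. -/
theorem prob_terminal_z_eq_expected_product {X A : Type*}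
    [Fintype X] [Fintype A] [Nonempty X] [Nonempty A]
    [DecidableEq X] [DecidableEq A]
    (T K : ℕ) (hT : 1 ≤ T)
    (Q : X → A → X → ℝ)
    (hQnn : ∀ x a x', 0 ≤ Q x a x') (hQle : ∀ x a x', Q x a x' ≤ 1)
    (hQsum : ∀ x a, ∑ x' : X, Q x a x' = 1)
    (f : ℕ → Fin (K + 1) → X → A → X → ℝ)
    (hf : ∀ t, t ≤ T - 1 → ∀ i x a x', 0 ≤ f t i x a x' ∧ f t i x a x' ≤ 1)
    (s : X)
    (dbar : Fin T → X × ZVec K → A → ℝ)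
    (hmr : IsMR dbar) (hind : Indiff dbar)
    (i : Fin (K + 1)) :
    (∑ xzs : Fin (T + 1) → X × ZVec K, ∑ as : Fin T → A,
        if (xzs (Fin.last T)).2 i = 1 then trajProbBar T K Q f dbar s xzs as else 0) =
      ∑ xs : Fin (T + 1) → X, ∑ as : Fin T → A,
        trajProb T Q (Gamma dbar) s xs as *
          ∏ t : Fin T, f t i (xs t.castSucc) (as t) (xs t.succ) := by
  rw [← Equiv.sum_comp (Equiv.arrowProdEquivProdArrow (Fin (T+1)) (fun _ => X) (fun _ => ZVec K)).symm,
    Fintype.sum_prod_type]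
  show (∑ xs : Fin (T+1) → X, ∑ zs : Fin (T+1) → ZVec K, ∑ as : Fin T → A,
      if zs (Fin.last T) i = 1 then
        trajProbBar T K Q f dbar s (fun t => (xs t, zs t)) as else 0) = _
  refine Finset.sum_congr rfl fun xs _ => ?_
  rw [Finset.sum_comm]
  refine Finset.sum_congr rfl fun as _ => ?_
  have bodyeq : ∀ zs : Fin (T+1) → ZVec K,
      (if zs (Fin.last T) i = 1 then
        trajProbBar T K Q f dbar s (fun t => (xs t, zs t)) as else 0) =
      trajProb T Q (Gamma dbar) s xs as *
        ((if zs 0 = oneVec K then (1:ℝ) else 0) *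
          (if zs (Fin.last T) i = 1 then 1 else 0) *
          ∏ j, ∏ t : Fin T,
            step (f t j (xs t.castSucc) (as t) (xs t.succ)) (zs t.castSucc j) (zs t.succ j)) := by
    intro zs
    have hsplit : ∀ (P : Prop) [Decidable P] (x : ℝ),
        (if P then x else 0) = (if P then 1 else 0) * x := by
      intros P _ x; split <;> simp
    rw [hsplit]
    unfold trajProbBar trajProb
    have hinit : (if ((xs 0 : X), zs 0) = (s, oneVec K) then (1:ℝ) else 0) =
        (if xs 0 = s then 1 else 0) * (if zs 0 = oneVec K then 1 else 0) := by
      by_cases h1 : xs 0 = s <;> by_cases h2 : zs 0 = oneVec K <;>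
        simp [Prod.ext_iff, h1, h2]
    have hfac : ∀ t : Fin T,
        dbar t (xs t.castSucc, zs t.castSucc) (as t) *
          Qbar K Q f ((t:ℕ)+1) (xs t.castSucc) (zs t.castSucc) (as t)
            (xs t.succ) (zs t.succ) =
        (Gamma dbar t (xs t.castSucc) (as t) * Q (xs t.castSucc) (as t) (xs t.succ)) *
          ∏ j, step (f t j (xs t.castSucc) (as t) (xs t.succ))
            (zs t.castSucc j) (zs t.succ j) := by
      intro t
      rw [Qbar_eq_prod_step, Nat.add_sub_cancel, hind t]
      show Gamma dbar t (xs t.castSucc) (as t) * _ = _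
      ring
    rw [hinit, Finset.prod_congr rfl (fun t _ => hfac t), Finset.prod_mul_distrib,
      Finset.prod_comm]
    ring
  rw [Finset.sum_congr rfl (fun zs _ => bodyeq zs), ← Finset.mul_sum,
    zsum T K (fun t j => f t j (xs t.castSucc) (as t) (xs t.succ)) i]
end

section
/- For every augmented policy η ∈ Π̄ and its projection Γ(η) ∈ Π_MR, and every 0 ≤ i ≤ K: w̄^η_i(s,𝟏) = w^{Γ(η)}_i(s); that is, the total expected cost of η in the augmented model (sum of stage costs r̄_{t,i} plus terminal cost r̄_{T,i}) equals the combined additive-plus-multiplicative cost of Γ(η) in the original model. -/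
open Finset

namespace WbarAux

variable {X A : Type*} [Fintype X] [Fintype A] [DecidableEq X]

noncomputable def Eval {X A : Type*} [Fintype X] [Fintype A] :
    (T : ℕ) → (Fin T → X → A → X → ℝ) → (X → ℝ) → X → ℝ
  | 0, _, h, s => h s
  | T+1, F, h, s => ∑ a : A, ∑ x' : X, F 0 s a x' * Eval T (fun u => F u.succ) h x'

lemma sum_paths (T : ℕ) (F : Fin T → X → A → X → ℝ) (g h : X → ℝ) :
    ∑ xs : Fin (T + 1) → X, ∑ as : Fin T → A,
      g (xs 0) * (∏ t : Fin T, F t (xs t.castSucc) (as t) (xs t.succ)) * h (xs (Fin.last T))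
      = ∑ x : X, g x * Eval T F h x := by
  induction T generalizing g with
  | zero =>
      rw [← Equiv.sum_comp (Equiv.funUnique (Fin 1) X).symm]
      simp [Eval]
  | succ T ih =>
      rw [← Equiv.sum_comp (Fin.consEquiv (fun _ : Fin (T + 2) => X))]
      rw [Finset.sum_congr rfl fun (p : X × (Fin (T + 1) → X)) _ =>
        (Equiv.sum_comp (Fin.consEquiv (fun _ : Fin (T + 1) => A))
          (fun as : Fin (T + 1) → A =>
            g ((Fin.consEquiv fun _ => X) p 0) *
              (∏ t : Fin (T + 1), F t ((Fin.consEquiv fun _ => X) p t.castSucc) (as t)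
                ((Fin.consEquiv fun _ => X) p t.succ)) *
              h ((Fin.consEquiv fun _ => X) p (Fin.last (T + 1))))).symm]
      simp only [Fin.consEquiv_apply, Fintype.sum_prod_type, Fin.cons_zero, Fin.cons_succ,
        Fin.prod_univ_succ, ← Fin.succ_castSucc, ← Fin.succ_last, Fin.castSucc_zero]
      refine Finset.sum_congr rfl fun x0 _ => ?_
      rw [Finset.sum_comm]
      simp only [Eval, Finset.mul_sum, ← mul_assoc]
      refine Finset.sum_congr rfl fun a0 _ => ?_
      exact ih (fun u => F u.succ) (fun y => g x0 * F 0 x0 a0 y)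
lemma eval_const (T : ℕ) (F : Fin T → X → A → X → ℝ)
    (hrow : ∀ (t : Fin T) (x : X), ∑ a : A, ∑ x' : X, F t x a x' = 1) (c : ℝ) (s : X) :
    Eval T F (fun _ => c) s = c := by
  induction T generalizing s with
  | zero => rfl
  | succ T ih =>
      simp only [Eval]
      rw [Finset.sum_congr rfl fun a _ => Finset.sum_congr rfl fun x' _ => by
        rw [ih (fun u => F u.succ) (fun u x => hrow u.succ x) x']]
      simp only [← Finset.sum_mul, hrow 0 s, one_mul]

lemma eval_step_congr (T : ℕ) (F G : Fin T → X → A → X → ℝ) (t0 : Fin T)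
    (hne : ∀ u, u ≠ t0 → F u = G u)
    (hrow : ∀ x : X, ∑ a : A, ∑ x' : X, F t0 x a x' = ∑ a : A, ∑ x' : X, G t0 x a x')
    (hF : ∀ u : Fin T, t0 < u → ∀ x : X, ∑ a : A, ∑ x' : X, F u x a x' = 1)
    (hG : ∀ u : Fin T, t0 < u → ∀ x : X, ∑ a : A, ∑ x' : X, G u x a x' = 1)
    (s : X) :
    Eval T F (fun _ => 1) s = Eval T G (fun _ => 1) s := by
  induction T generalizing s with
  | zero => exact absurd t0.isLt (by omega)
  | succ T ih =>
      rcases Fin.eq_zero_or_eq_succ t0 with h0 | ⟨v, rfl⟩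
      · subst h0
        simp only [Eval]
        have hFc : ∀ x', Eval T (fun u => F u.succ) (fun _ => (1:ℝ)) x' = 1 :=
          fun x' => eval_const T _ (fun u x => hF u.succ (Fin.succ_pos u) x) 1 x'
        have hGc : ∀ x', Eval T (fun u => G u.succ) (fun _ => (1:ℝ)) x' = 1 :=
          fun x' => eval_const T _ (fun u x => hG u.succ (Fin.succ_pos u) x) 1 x'
        simp only [hFc, hGc, mul_one]
        exact hrow s
      · simp only [Eval]
        rw [hne 0 (Fin.succ_ne_zero v).symm]
        refine Finset.sum_congr rfl fun a _ => Finset.sum_congr rfl fun x' _ => ?_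
        rw [ih (fun u => F u.succ) (fun u => G u.succ) v
          (fun u hu => hne u.succ (fun h => hu (Fin.succ_injective _ h)))
          hrow
          (fun u hu x => hF u.succ (by simpa [Fin.succ_lt_succ_iff] using hu) x)
          (fun u hu x => hG u.succ (by simpa [Fin.succ_lt_succ_iff] using hu) x) x']
variable {K : ℕ}

lemma eval_aug_const (T : ℕ) (F : Fin T → X → A → X → ℝ)
    (ζ : Fin T → X → A → X → ZVec K → ZVec K → ℝ)
    (hζ : ∀ (t : Fin T) (x : X) (a : A) (x' : X) (z : ZVec K), ∑ z' : ZVec K, ζ t x a x' z z' = 1)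
    (h : X → ℝ) (s : X) (z : ZVec K) :
    Eval T (fun t (p : X × ZVec K) a p' => F t p.1 a p'.1 * ζ t p.1 a p'.1 p.2 p'.2)
      (fun p : X × ZVec K => h p.1) (s, z) = Eval T F h s := by
  induction T generalizing s z with
  | zero => rfl
  | succ T ih =>
      have hih : ∀ (x' : X) (z' : ZVec K),
          Eval T (fun u (p : X × ZVec K) a p' => F u.succ p.1 a p'.1 *
            ζ u.succ p.1 a p'.1 p.2 p'.2) (fun p : X × ZVec K => h p.1) (x', z')
          = Eval T (fun u => F u.succ) h x' :=
        fun x' z' => ih _ _ (fun u => hζ u.succ) x' z'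
      simp only [Eval, Fintype.sum_prod_type, hih]
      refine Finset.sum_congr rfl fun a _ => Finset.sum_congr rfl fun x' _ => ?_
      rw [← Finset.sum_mul, ← Finset.mul_sum, hζ 0 s a x' z, mul_one]

lemma eval_aug_zi (i : Fin (K + 1)) (T : ℕ) (F : Fin T → X → A → X → ℝ)
    (ζ : Fin T → X → A → X → ZVec K → ZVec K → ℝ)
    (ψ : Fin T → X → A → X → ℝ)
    (hζ : ∀ (t : Fin T) (x : X) (a : A) (x' : X) (z : ZVec K),
      ∑ z' : ZVec K, ζ t x a x' z z' * ((z' i : ℕ) : ℝ) = ((z i : ℕ) : ℝ) * ψ t x a x')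
    (s : X) (z : ZVec K) :
    Eval T (fun t (p : X × ZVec K) a p' => F t p.1 a p'.1 * ζ t p.1 a p'.1 p.2 p'.2)
      (fun p : X × ZVec K => ((p.2 i : ℕ) : ℝ)) (s, z)
    = ((z i : ℕ) : ℝ) *
        Eval T (fun t x a x' => F t x a x' * ψ t x a x') (fun _ => 1) s := by
  induction T generalizing s z with
  | zero => simp [Eval]
  | succ T ih =>
      have hih : ∀ (x' : X) (z' : ZVec K),
          Eval T (fun u (p : X × ZVec K) a p' => F u.succ p.1 a p'.1 *
            ζ u.succ p.1 a p'.1 p.2 p'.2) (fun p : X × ZVec K => ((p.2 i : ℕ) : ℝ)) (x', z')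
          = ((z' i : ℕ) : ℝ) *
              Eval T (fun u x a x' => F u.succ x a x' * ψ u.succ x a x') (fun _ => 1) x' :=
        fun x' z' => ih _ _ _ (fun u => hζ u.succ) x' z'
      simp only [Eval, Fintype.sum_prod_type, hih, Finset.mul_sum]
      refine Finset.sum_congr rfl fun a _ => Finset.sum_congr rfl fun x' _ => ?_
      have key := hζ 0 s a x' z
      calc ∑ z' : ZVec K, F 0 s a x' * ζ 0 s a x' z z' *
            (((z' i : ℕ) : ℝ) * Eval T (fun u x a x' => F u.succ x a x' * ψ u.succ x a x')
              (fun _ => 1) x')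
          = (∑ z' : ZVec K, ζ 0 s a x' z z' * ((z' i : ℕ) : ℝ)) *
            (F 0 s a x' * Eval T (fun u x a x' => F u.succ x a x' * ψ u.succ x a x')
              (fun _ => 1) x') := by
            rw [Finset.sum_mul]; exact Finset.sum_congr rfl fun z' _ => by ring
        _ = _ := by rw [key]; ring

noncomputable def sigma (c : ℝ) (zi zi' : Fin 2) : ℝ :=
  if zi = 0 ∧ zi' = 1 then 0 else rho c zi zi'

lemma zeta_eq_prod (K : ℕ) (c : Fin (K + 1) → ℝ) (z z' : ZVec K) :
    (if ∃ j, z j = 0 ∧ z' j = 1 then (0 : ℝ) else ∏ j, rho (c j) (z j) (z' j))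
      = ∏ j, sigma (c j) (z j) (z' j) := by
  split_ifs with hex
  · obtain ⟨j, hj⟩ := hex
    exact (Finset.prod_eq_zero (Finset.mem_univ j) (by simp [sigma, hj.1, hj.2])).symm
  · push_neg at hex
    refine Finset.prod_congr rfl fun j _ => ?_
    rw [sigma, if_neg]
    intro hj
    exact hex j hj.1 hj.2

lemma sum_sigma (c : ℝ) (zi : Fin 2) : ∑ zi' : Fin 2, sigma c zi zi' = 1 := by
  fin_cases zi <;> simp [sigma, rho, Fin.sum_univ_two] <;> ring

lemma sum_sigma_weighted (c : ℝ) (zi : Fin 2) :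
    ∑ zi' : Fin 2, sigma c zi zi' * ((zi' : ℕ) : ℝ) = ((zi : ℕ) : ℝ) * c := by
  fin_cases zi <;> simp [sigma, rho, Fin.sum_univ_two]

lemma sum_zeta {K : ℕ} (c : Fin (K + 1) → ℝ) (z : ZVec K) :
    ∑ z' : ZVec K, ∏ j, sigma (c j) (z j) (z' j) = 1 := by
  rw [← Fintype.piFinset_univ,
    ← Finset.prod_univ_sum (fun _ => Finset.univ) (fun j v => sigma (c j) (z j) v)]
  rw [Finset.prod_congr rfl fun j _ => sum_sigma (c j) (z j)]
  simp

lemma sum_zeta_zi {K : ℕ} (c : Fin (K + 1) → ℝ) (z : ZVec K) (i : Fin (K + 1)) :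
    ∑ z' : ZVec K, (∏ j, sigma (c j) (z j) (z' j)) * ((z' i : ℕ) : ℝ)
      = ((z i : ℕ) : ℝ) * c i := by
  have h1 : ∀ z' : ZVec K, (∏ j, sigma (c j) (z j) (z' j)) * ((z' i : ℕ) : ℝ)
      = ∏ j, (sigma (c j) (z j) (z' j) * (if j = i then ((z' j : ℕ) : ℝ) else 1)) := by
    intro z'
    rw [Finset.prod_mul_distrib, Finset.prod_ite_eq' Finset.univ i (fun j => ((z' j : ℕ) : ℝ))]
    simp
  simp only [h1]
  rw [← Fintype.piFinset_univ,
    ← Finset.prod_univ_sum (fun _ => Finset.univ)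
      (fun j v => sigma (c j) (z j) v * if j = i then ((v : ℕ) : ℝ) else 1)]
  rw [Finset.prod_eq_single i
    (fun j _ hj => by
      rw [Finset.sum_congr rfl fun v _ => by rw [if_neg hj, mul_one]]
      exact sum_sigma _ _)
    (by simp)]
  rw [Finset.sum_congr rfl fun v _ => by rw [if_pos rfl]]
  exact sum_sigma_weighted _ _

lemma split_sum {ι κ : Type*} [Fintype ι] [Fintype κ] {T : ℕ} (P : ι → κ → ℝ)
    (c : Fin T → ι → κ → ℝ) (β : ℝ) (e : ι → κ → ℝ) :
    ∑ p : ι, ∑ q : κ, P p q * ((∑ t, c t p q) + β * e p q)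
      = (∑ t, ∑ p : ι, ∑ q : κ, P p q * c t p q) + β * ∑ p : ι, ∑ q : κ, P p q * e p q := by
  have h1 : ∀ p q, P p q * ((∑ t, c t p q) + β * e p q)
      = (∑ t, P p q * c t p q) + β * (P p q * e p q) := by
    intro p q; rw [mul_add, Finset.mul_sum]; ring
  simp only [h1, Finset.sum_add_distrib]
  congr 1
  · rw [Finset.sum_congr rfl fun p (_ : p ∈ Finset.univ) =>
      Finset.sum_comm (s := Finset.univ) (t := Finset.univ) (f := fun q t => P p q * c t p q)]
    exact Finset.sum_comm
  · simp only [← Finset.mul_sum]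

end WbarAux

set_option maxHeartbeats 1000000 in
/-- For every `η ∈ Π̄` with projection `Γ(η)` and every `0 ≤ i ≤ K`:
`w̄^η_i(s,𝟏) = w^{Γ(η)}_i(s)`. -/
theorem wbarcost_eq_wcost {X A : Type*} [Fintype X] [Fintype A] [Nonempty X] [Nonempty A]
    [DecidableEq X] [DecidableEq A]
    (T K : ℕ) (hT : 1 ≤ T)
    (Q : X → A → X → ℝ)
    (hQnn : ∀ x a x', 0 ≤ Q x a x') (hQle : ∀ x a x', Q x a x' ≤ 1)
    (hQsum : ∀ x a, ∑ x' : X, Q x a x' = 1)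
    (f : ℕ → Fin (K + 1) → X → A → X → ℝ)
    (hf : ∀ t, t ≤ T - 1 → ∀ i x a x', 0 ≤ f t i x a x' ∧ f t i x a x' ≤ 1)
    (r : ℕ → Fin (K + 1) → X → A → X → ℝ) (α : Fin (K + 1) → ℝ)
    (s : X)
    (dbar : Fin T → X × ZVec K → A → ℝ)
    (hmr : IsMR dbar) (hind : Indiff dbar)
    (i : Fin (K + 1)) :
    wbarcost T K Q f r α dbar s i = wcost T Q r f α (Gamma dbar) s i := by
  classical
  have hind' : ∀ (u : Fin T) (p : X × ZVec K) (a : A),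
      dbar u p a = dbar u (p.1, oneVec K) a := fun u p a => hind u p.1 p.2 a
  have hQbar : ∀ (t : Fin T) (x : X) (z : ZVec K) (a : A) (x' : X) (z' : ZVec K),
      Qbar K Q f ((t : ℕ) + 1) x z a x' z' =
        Q x a x' * ∏ j, WbarAux.sigma (f (t : ℕ) j x a x') (z j) (z' j) := by
    intro t x z a x' z'
    rw [Qbar, Nat.add_sub_cancel, ← WbarAux.zeta_eq_prod K (fun j => f (t : ℕ) j x a x') z z']
    split_ifs with h
    · rw [mul_zero]
    · rfl
  have hrowBase : ∀ (u : Fin T) (x : X),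
      ∑ a : A, ∑ x' : X, dbar u (x, oneVec K) a * Q x a x' = 1 := by
    intro u x
    rw [Finset.sum_congr rfl fun a _ => by rw [← Finset.mul_sum, hQsum, mul_one]]
    exact (hmr u (x, oneVec K)).2
  have hterm : ∀ t : Fin T,
      (∑ xzs : Fin (T + 1) → X × ZVec K, ∑ as : Fin T → A,
        trajProbBar T K Q f dbar s xzs as * rbar Q r (t : ℕ) i (xzs t.castSucc).1 (as t))
      = ∑ xs : Fin (T + 1) → X, ∑ as : Fin T → A,
        trajProb T Q (Gamma dbar) s xs as * r (t : ℕ) i (xs t.castSucc) (as t) (xs t.succ) := by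
    intro t
    have l1 : ∀ (xzs : Fin (T + 1) → X × ZVec K) (as : Fin T → A),
        trajProbBar T K Q f dbar s xzs as * rbar Q r (t : ℕ) i (xzs t.castSucc).1 (as t)
        = (if xzs 0 = (s, oneVec K) then (1:ℝ) else 0) *
          (∏ u : Fin T,
            dbar u ((xzs u.castSucc).1, oneVec K) (as u) *
                Q (xzs u.castSucc).1 (as u) (xzs u.succ).1 *
                (if u = t then rbar Q r (u : ℕ) i (xzs u.castSucc).1 (as u) else 1) *
              ∏ j, WbarAux.sigma (f (u : ℕ) j (xzs u.castSucc).1 (as u) (xzs u.succ).1)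
                ((xzs u.castSucc).2 j) ((xzs u.succ).2 j)) * 1 := by
      intro xzs as
      have hite : (∏ u : Fin T,
          if u = t then rbar Q r (u : ℕ) i (xzs u.castSucc).1 (as u) else 1)
          = rbar Q r (t : ℕ) i (xzs t.castSucc).1 (as t) := by
        rw [Finset.prod_ite_eq' Finset.univ t
          (fun u => rbar Q r (u : ℕ) i (xzs u.castSucc).1 (as u))]
        simp
      rw [trajProbBar, mul_one, mul_assoc, ← hite, ← Finset.prod_mul_distrib]
      congr 1
      refine Finset.prod_congr rfl fun u _ => ?_
      rw [hQbar u (xzs u.castSucc).1 (xzs u.castSucc).2 (as u) (xzs u.succ).1 (xzs u.succ).2,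
        hind' u (xzs u.castSucc) (as u)]
      ring
    have l2 : ∀ (xs : Fin (T + 1) → X) (as : Fin T → A),
        trajProb T Q (Gamma dbar) s xs as * r (t : ℕ) i (xs t.castSucc) (as t) (xs t.succ)
        = (if xs 0 = s then (1:ℝ) else 0) *
          (∏ u : Fin T, dbar u (xs u.castSucc, oneVec K) (as u) *
              Q (xs u.castSucc) (as u) (xs u.succ) *
              (if u = t then r (u : ℕ) i (xs u.castSucc) (as u) (xs u.succ) else 1)) * 1 := by
      intro xs as
      have hite : (∏ u : Fin T,
          if u = t then r (u : ℕ) i (xs u.castSucc) (as u) (xs u.succ) else 1)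
          = r (t : ℕ) i (xs t.castSucc) (as t) (xs t.succ) := by
        rw [Finset.prod_ite_eq' Finset.univ t
          (fun u => r (u : ℕ) i (xs u.castSucc) (as u) (xs u.succ))]
        simp
      rw [trajProb, mul_one, mul_assoc, ← hite, ← Finset.prod_mul_distrib]
      simp only [Gamma]
    calc (∑ xzs : Fin (T + 1) → X × ZVec K, ∑ as : Fin T → A,
        trajProbBar T K Q f dbar s xzs as * rbar Q r (t : ℕ) i (xzs t.castSucc).1 (as t))
        = ∑ xzs : Fin (T + 1) → X × ZVec K, ∑ as : Fin T → A,
          (if xzs 0 = (s, oneVec K) then (1:ℝ) else 0) *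
          (∏ u : Fin T,
            dbar u ((xzs u.castSucc).1, oneVec K) (as u) *
                Q (xzs u.castSucc).1 (as u) (xzs u.succ).1 *
                (if u = t then rbar Q r (u : ℕ) i (xzs u.castSucc).1 (as u) else 1) *
              ∏ j, WbarAux.sigma (f (u : ℕ) j (xzs u.castSucc).1 (as u) (xzs u.succ).1)
                ((xzs u.castSucc).2 j) ((xzs u.succ).2 j)) * 1 :=
          Finset.sum_congr rfl fun xzs _ => Finset.sum_congr rfl fun as _ => l1 xzs as
      _ = ∑ p : X × ZVec K, (if p = (s, oneVec K) then (1:ℝ) else 0) *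
            WbarAux.Eval T (fun (u : Fin T) (p : X × ZVec K) (a : A) (p' : X × ZVec K) =>
              dbar u (p.1, oneVec K) a * Q p.1 a p'.1 *
                  (if u = t then rbar Q r (u : ℕ) i p.1 a else 1) *
                ∏ j, WbarAux.sigma (f (u : ℕ) j p.1 a p'.1) (p.2 j) (p'.2 j))
              (fun _ => (1:ℝ)) p :=
          WbarAux.sum_paths T
            (fun (u : Fin T) (p : X × ZVec K) (a : A) (p' : X × ZVec K) =>
              dbar u (p.1, oneVec K) a * Q p.1 a p'.1 *
                  (if u = t then rbar Q r (u : ℕ) i p.1 a else 1) *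
                ∏ j, WbarAux.sigma (f (u : ℕ) j p.1 a p'.1) (p.2 j) (p'.2 j))
            (fun p => if p = (s, oneVec K) then (1:ℝ) else 0) (fun _ => (1:ℝ))
      _ = WbarAux.Eval T (fun (u : Fin T) (p : X × ZVec K) (a : A) (p' : X × ZVec K) =>
              dbar u (p.1, oneVec K) a * Q p.1 a p'.1 *
                  (if u = t then rbar Q r (u : ℕ) i p.1 a else 1) *
                ∏ j, WbarAux.sigma (f (u : ℕ) j p.1 a p'.1) (p.2 j) (p'.2 j))
              (fun _ => (1:ℝ)) (s, oneVec K) := by simp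
      _ = WbarAux.Eval T (fun (u : Fin T) (x : X) (a : A) (x' : X) =>
              dbar u (x, oneVec K) a * Q x a x' *
                (if u = t then rbar Q r (u : ℕ) i x a else 1)) (fun _ => (1:ℝ)) s :=
          WbarAux.eval_aug_const T
            (fun (u : Fin T) (x : X) (a : A) (x' : X) =>
              dbar u (x, oneVec K) a * Q x a x' *
                (if u = t then rbar Q r (u : ℕ) i x a else 1))
            (fun (u : Fin T) (x : X) (a : A) (x' : X) (z z' : ZVec K) =>
              ∏ j, WbarAux.sigma (f (u : ℕ) j x a x') (z j) (z' j))
            (fun u x a x' z => WbarAux.sum_zeta (fun j => f (u : ℕ) j x a x') z)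
            (fun _ => (1:ℝ)) s (oneVec K)
      _ = WbarAux.Eval T (fun (u : Fin T) (x : X) (a : A) (x' : X) =>
              dbar u (x, oneVec K) a * Q x a x' *
                (if u = t then r (u : ℕ) i x a x' else 1)) (fun _ => (1:ℝ)) s := by
          apply WbarAux.eval_step_congr T _ _ t
          · intro u hu; funext x a x'; simp [hu]
          · intro x
            simp only [eq_self_iff_true, if_true]
            refine Finset.sum_congr rfl fun a _ => ?_
            have h1 : ∑ x' : X, dbar t (x, oneVec K) a * Q x a x' * rbar Q r (t:ℕ) i x a
                = dbar t (x, oneVec K) a * rbar Q r (t:ℕ) i x a * ∑ x' : X, Q x a x' := by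
              rw [Finset.mul_sum]; exact Finset.sum_congr rfl fun x' _ => by ring
            have h2 : ∑ x' : X, dbar t (x, oneVec K) a * Q x a x' * r (t:ℕ) i x a x'
                = dbar t (x, oneVec K) a * ∑ x' : X, r (t:ℕ) i x a x' * Q x a x' := by
              rw [Finset.mul_sum]; exact Finset.sum_congr rfl fun x' _ => by ring
            rw [h1, h2, hQsum, mul_one, rbar]
          · intro u hu x
            simp only [if_neg (ne_of_gt hu), mul_one]
            exact hrowBase u x
          · intro u hu x
            simp only [if_neg (ne_of_gt hu), mul_one]
            exact hrowBase u x
      _ = ∑ x : X, (if x = s then (1:ℝ) else 0) *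
            WbarAux.Eval T (fun (u : Fin T) (x : X) (a : A) (x' : X) =>
              dbar u (x, oneVec K) a * Q x a x' *
                (if u = t then r (u : ℕ) i x a x' else 1)) (fun _ => (1:ℝ)) x := by simp
      _ = ∑ xs : Fin (T + 1) → X, ∑ as : Fin T → A,
          (if xs 0 = s then (1:ℝ) else 0) *
          (∏ u : Fin T, dbar u (xs u.castSucc, oneVec K) (as u) *
              Q (xs u.castSucc) (as u) (xs u.succ) *
              (if u = t then r (u : ℕ) i (xs u.castSucc) (as u) (xs u.succ) else 1)) * 1 :=
          (WbarAux.sum_paths T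
            (fun (u : Fin T) (x : X) (a : A) (x' : X) =>
              dbar u (x, oneVec K) a * Q x a x' *
                (if u = t then r (u : ℕ) i x a x' else 1))
            (fun x => if x = s then (1:ℝ) else 0) (fun _ => (1:ℝ))).symm
      _ = ∑ xs : Fin (T + 1) → X, ∑ as : Fin T → A,
          trajProb T Q (Gamma dbar) s xs as * r (t : ℕ) i (xs t.castSucc) (as t) (xs t.succ) :=
          Finset.sum_congr rfl fun xs _ => Finset.sum_congr rfl fun as _ => (l2 xs as).symm
  have he : (∑ xzs : Fin (T + 1) → X × ZVec K, ∑ as : Fin T → A,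
      trajProbBar T K Q f dbar s xzs as * (((xzs (Fin.last T)).2 i : ℕ) : ℝ))
      = ∑ xs : Fin (T + 1) → X, ∑ as : Fin T → A,
        trajProb T Q (Gamma dbar) s xs as *
          ∏ u : Fin T, f (u : ℕ) i (xs u.castSucc) (as u) (xs u.succ) := by
    have l1e : ∀ (xzs : Fin (T + 1) → X × ZVec K) (as : Fin T → A),
        trajProbBar T K Q f dbar s xzs as
        = (if xzs 0 = (s, oneVec K) then (1:ℝ) else 0) *
          ∏ u : Fin T,
            dbar u ((xzs u.castSucc).1, oneVec K) (as u) *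
                Q (xzs u.castSucc).1 (as u) (xzs u.succ).1 *
              ∏ j, WbarAux.sigma (f (u : ℕ) j (xzs u.castSucc).1 (as u) (xzs u.succ).1)
                ((xzs u.castSucc).2 j) ((xzs u.succ).2 j) := by
      intro xzs as
      rw [trajProbBar]
      congr 1
      refine Finset.prod_congr rfl fun u _ => ?_
      rw [hQbar u (xzs u.castSucc).1 (xzs u.castSucc).2 (as u) (xzs u.succ).1 (xzs u.succ).2,
        hind' u (xzs u.castSucc) (as u)]
      ring
    have l2e : ∀ (xs : Fin (T + 1) → X) (as : Fin T → A),
        trajProb T Q (Gamma dbar) s xs as *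
          ∏ u : Fin T, f (u : ℕ) i (xs u.castSucc) (as u) (xs u.succ)
        = (if xs 0 = s then (1:ℝ) else 0) *
          (∏ u : Fin T, dbar u (xs u.castSucc, oneVec K) (as u) *
              Q (xs u.castSucc) (as u) (xs u.succ) *
              f (u : ℕ) i (xs u.castSucc) (as u) (xs u.succ)) * 1 := by
      intro xs as
      rw [trajProb, mul_one, mul_assoc, ← Finset.prod_mul_distrib]
      simp only [Gamma]
    calc (∑ xzs : Fin (T + 1) → X × ZVec K, ∑ as : Fin T → A,
        trajProbBar T K Q f dbar s xzs as * (((xzs (Fin.last T)).2 i : ℕ) : ℝ))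
        = ∑ xzs : Fin (T + 1) → X × ZVec K, ∑ as : Fin T → A,
          (if xzs 0 = (s, oneVec K) then (1:ℝ) else 0) *
          (∏ u : Fin T,
            dbar u ((xzs u.castSucc).1, oneVec K) (as u) *
                Q (xzs u.castSucc).1 (as u) (xzs u.succ).1 *
              ∏ j, WbarAux.sigma (f (u : ℕ) j (xzs u.castSucc).1 (as u) (xzs u.succ).1)
                ((xzs u.castSucc).2 j) ((xzs u.succ).2 j)) *
          (((xzs (Fin.last T)).2 i : ℕ) : ℝ) :=
          Finset.sum_congr rfl fun xzs _ => Finset.sum_congr rfl fun as _ => by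
            rw [l1e xzs as]
      _ = ∑ p : X × ZVec K, (if p = (s, oneVec K) then (1:ℝ) else 0) *
            WbarAux.Eval T (fun (u : Fin T) (p : X × ZVec K) (a : A) (p' : X × ZVec K) =>
              dbar u (p.1, oneVec K) a * Q p.1 a p'.1 *
                ∏ j, WbarAux.sigma (f (u : ℕ) j p.1 a p'.1) (p.2 j) (p'.2 j))
              (fun p : X × ZVec K => ((p.2 i : ℕ) : ℝ)) p :=
          WbarAux.sum_paths T
            (fun (u : Fin T) (p : X × ZVec K) (a : A) (p' : X × ZVec K) =>
              dbar u (p.1, oneVec K) a * Q p.1 a p'.1 *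
                ∏ j, WbarAux.sigma (f (u : ℕ) j p.1 a p'.1) (p.2 j) (p'.2 j))
            (fun p => if p = (s, oneVec K) then (1:ℝ) else 0)
            (fun p : X × ZVec K => ((p.2 i : ℕ) : ℝ))
      _ = WbarAux.Eval T (fun (u : Fin T) (p : X × ZVec K) (a : A) (p' : X × ZVec K) =>
              dbar u (p.1, oneVec K) a * Q p.1 a p'.1 *
                ∏ j, WbarAux.sigma (f (u : ℕ) j p.1 a p'.1) (p.2 j) (p'.2 j))
              (fun p : X × ZVec K => ((p.2 i : ℕ) : ℝ)) (s, oneVec K) := by simp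
      _ = ((oneVec K i : ℕ) : ℝ) *
            WbarAux.Eval T (fun (u : Fin T) (x : X) (a : A) (x' : X) =>
              dbar u (x, oneVec K) a * Q x a x' * f (u : ℕ) i x a x')
              (fun _ => (1:ℝ)) s :=
          WbarAux.eval_aug_zi i T
            (fun (u : Fin T) (x : X) (a : A) (x' : X) => dbar u (x, oneVec K) a * Q x a x')
            (fun (u : Fin T) (x : X) (a : A) (x' : X) (z z' : ZVec K) =>
              ∏ j, WbarAux.sigma (f (u : ℕ) j x a x') (z j) (z' j))
            (fun (u : Fin T) (x : X) (a : A) (x' : X) => f (u : ℕ) i x a x')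
            (fun u x a x' z => WbarAux.sum_zeta_zi (fun j => f (u : ℕ) j x a x') z i)
            s (oneVec K)
      _ = WbarAux.Eval T (fun (u : Fin T) (x : X) (a : A) (x' : X) =>
              dbar u (x, oneVec K) a * Q x a x' * f (u : ℕ) i x a x')
              (fun _ => (1:ℝ)) s := by norm_num [oneVec]
      _ = ∑ x : X, (if x = s then (1:ℝ) else 0) *
            WbarAux.Eval T (fun (u : Fin T) (x : X) (a : A) (x' : X) =>
              dbar u (x, oneVec K) a * Q x a x' * f (u : ℕ) i x a x')
              (fun _ => (1:ℝ)) x := by simp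
      _ = ∑ xs : Fin (T + 1) → X, ∑ as : Fin T → A,
          (if xs 0 = s then (1:ℝ) else 0) *
          (∏ u : Fin T, dbar u (xs u.castSucc, oneVec K) (as u) *
              Q (xs u.castSucc) (as u) (xs u.succ) *
              f (u : ℕ) i (xs u.castSucc) (as u) (xs u.succ)) * 1 :=
          (WbarAux.sum_paths T
            (fun (u : Fin T) (x : X) (a : A) (x' : X) =>
              dbar u (x, oneVec K) a * Q x a x' * f (u : ℕ) i x a x')
            (fun x => if x = s then (1:ℝ) else 0) (fun _ => (1:ℝ))).symm
      _ = ∑ xs : Fin (T + 1) → X, ∑ as : Fin T → A,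
          trajProb T Q (Gamma dbar) s xs as *
            ∏ u : Fin T, f (u : ℕ) i (xs u.castSucc) (as u) (xs u.succ) :=
          Finset.sum_congr rfl fun xs _ => Finset.sum_congr rfl fun as _ => (l2e xs as).symm
  calc wbarcost T K Q f r α dbar s i
      = (∑ t : Fin T, ∑ xzs : Fin (T + 1) → X × ZVec K, ∑ as : Fin T → A,
          trajProbBar T K Q f dbar s xzs as * rbar Q r (t : ℕ) i (xzs t.castSucc).1 (as t)) +
        α i * ∑ xzs : Fin (T + 1) → X × ZVec K, ∑ as : Fin T → A,
          trajProbBar T K Q f dbar s xzs as * (((xzs (Fin.last T)).2 i : ℕ) : ℝ) :=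
      WbarAux.split_sum (fun xzs as => trajProbBar T K Q f dbar s xzs as)
        (fun t xzs as => rbar Q r (t : ℕ) i (xzs t.castSucc).1 (as t)) (α i)
        (fun xzs as => (((xzs (Fin.last T)).2 i : ℕ) : ℝ))
    _ = (∑ t : Fin T, ∑ xs : Fin (T + 1) → X, ∑ as : Fin T → A,
          trajProb T Q (Gamma dbar) s xs as * r (t : ℕ) i (xs t.castSucc) (as t) (xs t.succ)) +
        α i * ∑ xs : Fin (T + 1) → X, ∑ as : Fin T → A,
          trajProb T Q (Gamma dbar) s xs as *
            ∏ u : Fin T, f (u : ℕ) i (xs u.castSucc) (as u) (xs u.succ) := by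
      rw [Finset.sum_congr rfl fun t _ => hterm t, he]
    _ = wcost T Q r f α (Gamma dbar) s i :=
      (WbarAux.split_sum (fun xs as => trajProb T Q (Gamma dbar) s xs as)
        (fun t xs as => r (t : ℕ) i (xs t.castSucc) (as t) (xs t.succ)) (α i)
        (fun xs as => ∏ u : Fin T, f (u : ℕ) i (xs u.castSucc) (as u) (xs u.succ))).symm
end

section
/- A policy η* ∈ Π̄ is an optimizer of the augmented constrained problem (P̄) (i.e., η* satisfies w̄^{η*}_i(s,𝟏) ≤ b_i for all 1 ≤ i ≤ K and w̄^{η*}_0(s,𝟏) ≤ w̄^η_0(s,𝟏) for every η ∈ Π̄ satisfying those constraints) if and only if Γ(η*) is an optimizer of the original constrained problem (P) (i.e., Γ(η*) satisfies w^{Γ(η*)}_i(s) ≤ b_i for all 1 ≤ i ≤ K and w^{Γ(η*)}_0(s) ≤ w^π_0(s) for every π ∈ Π_MR satisfying those constraints). -/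
open Finset

noncomputable def rhot (c : ℝ) (u v : Fin 2) : ℝ :=
  if u = 0 ∧ v = 1 then 0 else rho c u v

lemma rhot_zero (c : ℝ) (v : Fin 2) : rhot c 0 v = if v = 1 then 0 else 1 := by
  fin_cases v <;> simp [rhot, rho]

lemma rhot_one (c : ℝ) (v : Fin 2) : rhot c 1 v = if v = 1 then c else 1 - c := by
  fin_cases v <;> simp [rhot, rho]

lemma sum_snoc {X : Type*} [Fintype X] {M : Type*} [AddCommMonoid M] (n : ℕ)
    (F : (Fin (n+1) → X) → M) :
    ∑ xs : Fin (n+1) → X, F xs = ∑ p : (Fin n → X) × X, F (Fin.snoc p.1 p.2) := by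
  apply Fintype.sum_equiv ((Fin.snocEquiv (fun _ => X)).symm.trans (Equiv.prodComm _ _))
  intro xs
  simp [Fin.snocEquiv]


lemma chain_affine (n : ℕ) (c : Fin n → ℝ) (a b : ℝ) :
    ∑ p : Fin (n+1) → Fin 2,
      (if p 0 = 1 then 1 else 0) * (∏ t : Fin n, rhot (c t) (p t.castSucc) (p t.succ)) *
        (a * ((p (Fin.last n) : ℕ) : ℝ) + b)
    = a * ∏ t, c t + b := by
  induction n generalizing a b with
  | zero =>
      rw [sum_snoc, Fintype.sum_prod_type]
      have h0 : (0 : Fin 1) = Fin.last 0 := rfl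
      simp only [h0, Fin.snoc_last, Finset.univ_unique, Finset.sum_singleton,
        Finset.univ_eq_empty, Finset.prod_empty, Fin.sum_univ_two]
      norm_num
  | succ n ih =>
      rw [sum_snoc, Fintype.sum_prod_type]
      have key : ∀ q : Fin (n+1) → Fin 2,
          (∑ v : Fin 2, (if (Fin.snoc q v : Fin (n+2) → Fin 2) 0 = 1 then 1 else 0) *
            (∏ t : Fin (n+1), rhot (c t) ((Fin.snoc q v : Fin (n+2) → Fin 2) t.castSucc)
              ((Fin.snoc q v : Fin (n+2) → Fin 2) t.succ)) *
            (a * (((Fin.snoc q v : Fin (n+2) → Fin 2) (Fin.last (n+1)) : ℕ) : ℝ) + b))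
          = (if q 0 = 1 then 1 else 0) *
            (∏ t : Fin n, rhot ((c ∘ Fin.castSucc) t) (q t.castSucc) (q t.succ)) *
            ((c (Fin.last n) * a) * ((q (Fin.last n) : ℕ) : ℝ) + b) := by
        intro q
        have hsplit : ∀ v : Fin 2,
            (∏ t : Fin (n+1), rhot (c t) ((Fin.snoc q v : Fin (n+2) → Fin 2) t.castSucc)
              ((Fin.snoc q v : Fin (n+2) → Fin 2) t.succ))
            = (∏ t : Fin n, rhot ((c ∘ Fin.castSucc) t) (q t.castSucc) (q t.succ)) *
              rhot (c (Fin.last n)) (q (Fin.last n)) v := by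
          intro v
          rw [Fin.prod_univ_castSucc]
          congr 1
          · apply Finset.prod_congr rfl
            intro t _
            congr 1
            · exact Fin.snoc_castSucc _ _ _
            · rw [Fin.succ_castSucc]; exact Fin.snoc_castSucc _ _ _
          · congr 1
            · exact Fin.snoc_castSucc _ _ _
            · rw [Fin.succ_last]; exact Fin.snoc_last _ _
        have h00 : ∀ v : Fin 2, (Fin.snoc q v : Fin (n+2) → Fin 2) 0 = q 0 := by
          intro v
          rw [show (0 : Fin (n+2)) = Fin.castSucc 0 from rfl, Fin.snoc_castSucc]
        simp only [hsplit, h00, Fin.snoc_last, Fin.sum_univ_two]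
        generalize q (Fin.last n) = u
        fin_cases u <;> simp [rhot_zero, rhot_one] <;> split_ifs <;> ring
      rw [Finset.sum_congr rfl (fun q _ => key q), ih (c ∘ Fin.castSucc) (c (Fin.last n) * a) b,
        Fin.prod_univ_castSucc]
      simp only [Function.comp]
      ring

lemma chain_one (n : ℕ) (c : Fin n → ℝ) :
    ∑ p : Fin (n+1) → Fin 2,
      (if p 0 = 1 then 1 else 0) * (∏ t : Fin n, rhot (c t) (p t.castSucc) (p t.succ)) = 1 := by
  have h := chain_affine n c 0 1
  simpa using h

lemma chain_z (n : ℕ) (c : Fin n → ℝ) :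
    ∑ p : Fin (n+1) → Fin 2,
      (if p 0 = 1 then 1 else 0) * (∏ t : Fin n, rhot (c t) (p t.castSucc) (p t.succ)) *
        ((p (Fin.last n) : ℕ) : ℝ) = ∏ t, c t := by
  have h := chain_affine n c 1 0
  simpa using h

lemma zsum_split (T K : ℕ) (c : Fin T → Fin (K+1) → ℝ) (w : Fin (K+1) → Fin 2 → ℝ) :
    ∑ zs : Fin (T+1) → ZVec K,
      (if zs 0 = oneVec K then 1 else 0) *
        (∏ t : Fin T, ∏ j, rhot (c t j) (zs t.castSucc j) (zs t.succ j)) *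
        (∏ j, w j (zs (Fin.last T) j))
    = ∏ j, ∑ p : Fin (T+1) → Fin 2,
        (if p 0 = 1 then 1 else 0) * (∏ t : Fin T, rhot (c t j) (p t.castSucc) (p t.succ)) *
          w j (p (Fin.last T)) := by
  rw [Fintype.prod_sum]
  apply Fintype.sum_equiv (Equiv.piComm (fun (_ : Fin (T+1)) (_ : Fin (K+1)) => Fin 2))
  intro zs
  have hind : (if zs 0 = oneVec K then (1:ℝ) else 0) = ∏ j, (if zs 0 j = 1 then 1 else 0) := by
    rw [Finset.prod_boole]
    simp [oneVec, funext_iff]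
  rw [hind, Finset.prod_comm, ← Finset.prod_mul_distrib, ← Finset.prod_mul_distrib]
  rfl

lemma zsum_one (T K : ℕ) (c : Fin T → Fin (K+1) → ℝ) :
    ∑ zs : Fin (T+1) → ZVec K,
      (if zs 0 = oneVec K then 1 else 0) *
        (∏ t : Fin T, ∏ j, rhot (c t j) (zs t.castSucc j) (zs t.succ j)) = 1 := by
  have h := zsum_split T K c (fun _ _ => 1)
  simp only [Finset.prod_const_one, mul_one] at h
  rw [h]
  apply Finset.prod_eq_one
  intro j _
  exact chain_one T (fun t => c t j)

lemma zsum_z (T K : ℕ) (c : Fin T → Fin (K+1) → ℝ) (i : Fin (K+1)) :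
    ∑ zs : Fin (T+1) → ZVec K,
      (if zs 0 = oneVec K then 1 else 0) *
        (∏ t : Fin T, ∏ j, rhot (c t j) (zs t.castSucc j) (zs t.succ j)) *
        ((zs (Fin.last T) i : ℕ) : ℝ) = ∏ t, c t i := by
  have h := zsum_split T K c (fun j z => if j = i then ((z : ℕ) : ℝ) else 1)
  have hw : ∀ zs : Fin (T+1) → ZVec K,
      (∏ j, (if j = i then ((zs (Fin.last T) j : ℕ) : ℝ) else 1)) =
        ((zs (Fin.last T) i : ℕ) : ℝ) := by
    intro zs
    simp
  simp only [hw] at h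
  rw [h]
  have : ∀ j : Fin (K+1), (∑ p : Fin (T+1) → Fin 2,
      (if p 0 = 1 then 1 else 0) * (∏ t : Fin T, rhot (c t j) (p t.castSucc) (p t.succ)) *
        (if j = i then ((p (Fin.last T) : ℕ) : ℝ) else 1)) =
      if j = i then ∏ t, c t i else 1 := by
    intro j
    by_cases hj : j = i
    · subst hj
      simp only [if_pos rfl]
      exact chain_z T (fun t => c t j)
    · simp only [if_neg hj, mul_one]
      exact chain_one T (fun t => c t j)
  rw [Finset.prod_congr rfl (fun j _ => this j)]
  simp

lemma trajProb_snoc {X A : Type*} [DecidableEq X] (n : ℕ) (Q : X → A → X → ℝ)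
    (d : Fin (n+1) → X → A → ℝ) (s : X) (ys : Fin (n+1) → X) (bs : Fin n → A)
    (x' : X) (a : A) :
    trajProb (n+1) Q d s (Fin.snoc ys x') (Fin.snoc bs a) =
      trajProb n Q (fun t => d t.castSucc) s ys bs *
        (d (Fin.last n) (ys (Fin.last n)) a * Q (ys (Fin.last n)) a x') := by
  unfold trajProb
  have h0 : (Fin.snoc ys x' : Fin (n+2) → X) 0 = ys 0 := by
    rw [show (0 : Fin (n+2)) = Fin.castSucc 0 from rfl, Fin.snoc_castSucc]
  rw [h0, Fin.prod_univ_castSucc]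
  have hterm : ∀ t : Fin n,
      d t.castSucc ((Fin.snoc ys x' : Fin (n+2) → X) t.castSucc.castSucc)
          ((Fin.snoc bs a : Fin (n+1) → A) t.castSucc) *
        Q ((Fin.snoc ys x' : Fin (n+2) → X) t.castSucc.castSucc)
          ((Fin.snoc bs a : Fin (n+1) → A) t.castSucc)
          ((Fin.snoc ys x' : Fin (n+2) → X) t.castSucc.succ) =
      d t.castSucc (ys t.castSucc) (bs t) * Q (ys t.castSucc) (bs t) (ys t.succ) := by
    intro t
    rw [Fin.snoc_castSucc, Fin.snoc_castSucc, Fin.succ_castSucc, Fin.snoc_castSucc]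
  have hlast :
      d (Fin.last n) ((Fin.snoc ys x' : Fin (n+2) → X) (Fin.last n).castSucc)
          ((Fin.snoc bs a : Fin (n+1) → A) (Fin.last n)) *
        Q ((Fin.snoc ys x' : Fin (n+2) → X) (Fin.last n).castSucc)
          ((Fin.snoc bs a : Fin (n+1) → A) (Fin.last n))
          ((Fin.snoc ys x' : Fin (n+2) → X) (Fin.last n).succ) =
      d (Fin.last n) (ys (Fin.last n)) a * Q (ys (Fin.last n)) a x' := by
    rw [Fin.snoc_castSucc, Fin.snoc_last, Fin.succ_last, Fin.snoc_last]
  rw [Finset.prod_congr rfl (fun t _ => hterm t), hlast]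
  ring

lemma tower {X A : Type*} [Fintype X] [Fintype A] [DecidableEq X]
    (n : ℕ) (Q : X → A → X → ℝ) (hQsum : ∀ x a, ∑ x' : X, Q x a x' = 1)
    (d : Fin n → X → A → ℝ) (hd : ∀ (t : Fin n) (x : X), ∑ a : A, d t x a = 1)
    (s : X) (ψ : ℕ → X → A → X → ℝ) :
    ∑ xs : Fin (n+1) → X, ∑ as : Fin n → A,
      trajProb n Q d s xs as * (∑ t : Fin n, ψ t (xs t.castSucc) (as t) (xs t.succ))
    = ∑ xs : Fin (n+1) → X, ∑ as : Fin n → A,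
      trajProb n Q d s xs as *
        (∑ t : Fin n, ∑ x' : X, ψ t (xs t.castSucc) (as t) x' * Q (xs t.castSucc) (as t) x') := by
  induction n with
  | zero => simp
  | succ n ih =>
    set d' : Fin n → X → A → ℝ := fun t => d t.castSucc with hd'def
    have hd' : ∀ (t : Fin n) (x : X), ∑ a : A, d' t x a = 1 := fun t x => hd _ x
    set P : (Fin (n+1) → X) → (Fin n → A) → ℝ := fun ys bs => trajProb n Q d' s ys bs with hP
    set S : (Fin (n+1) → X) → (Fin n → A) → ℝ :=
      fun ys bs => ∑ t : Fin n, ψ t (ys t.castSucc) (bs t) (ys t.succ) with hS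
    set Sb : (Fin (n+1) → X) → (Fin n → A) → ℝ :=
      fun ys bs => ∑ t : Fin n, ∑ x' : X,
        ψ t (ys t.castSucc) (bs t) x' * Q (ys t.castSucc) (bs t) x' with hSb
    set G : (Fin (n+1) → X) → A → ℝ :=
      fun ys a => ∑ x'' : X, ψ n (ys (Fin.last n)) a x'' * Q (ys (Fin.last n)) a x'' with hG
    have hsum_split : ∀ (ys : Fin (n+1) → X) (x' : X) (bs : Fin n → A) (a : A),
        (∑ t : Fin (n+1), ψ t ((Fin.snoc ys x' : Fin (n+2) → X) t.castSucc)
          ((Fin.snoc bs a : Fin (n+1) → A) t) ((Fin.snoc ys x' : Fin (n+2) → X) t.succ))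
        = S ys bs + ψ n (ys (Fin.last n)) a x' := by
      intro ys x' bs a
      rw [Fin.sum_univ_castSucc]
      congr 1
      · apply Finset.sum_congr rfl
        intro t _
        rw [Fin.snoc_castSucc, Fin.snoc_castSucc, Fin.succ_castSucc, Fin.snoc_castSucc]
        simp
      · rw [Fin.snoc_castSucc, Fin.snoc_last, Fin.succ_last, Fin.snoc_last]
        simp
    have hbar_split : ∀ (ys : Fin (n+1) → X) (x' : X) (bs : Fin n → A) (a : A),
        (∑ t : Fin (n+1), ∑ x'' : X,
          ψ t ((Fin.snoc ys x' : Fin (n+2) → X) t.castSucc) ((Fin.snoc bs a : Fin (n+1) → A) t) x'' *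
          Q ((Fin.snoc ys x' : Fin (n+2) → X) t.castSucc) ((Fin.snoc bs a : Fin (n+1) → A) t) x'')
        = Sb ys bs + G ys a := by
      intro ys x' bs a
      rw [Fin.sum_univ_castSucc]
      congr 1
      · apply Finset.sum_congr rfl
        intro t _
        rw [Fin.snoc_castSucc, Fin.snoc_castSucc]
        simp
      · rw [Fin.snoc_castSucc, Fin.snoc_last]
        simp [hG]
    have lhs_eq :
        ∑ xs : Fin (n+1+1) → X, ∑ as : Fin (n+1) → A,
          trajProb (n+1) Q d s xs as *
            (∑ t : Fin (n+1), ψ t (xs t.castSucc) (as t) (xs t.succ))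
        = (∑ ys : Fin (n+1) → X, ∑ bs : Fin n → A, P ys bs * S ys bs) +
          ∑ ys : Fin (n+1) → X, ∑ bs : Fin n → A,
            P ys bs * ∑ a : A, d (Fin.last n) (ys (Fin.last n)) a * G ys a := by
      rw [sum_snoc]
      rw [Finset.sum_congr rfl (fun p _ => sum_snoc n (fun as =>
        trajProb (n+1) Q d s (Fin.snoc p.1 p.2) as *
          (∑ t : Fin (n+1), ψ t ((Fin.snoc p.1 p.2 : Fin (n+2) → X) t.castSucc) (as t)
            ((Fin.snoc p.1 p.2 : Fin (n+2) → X) t.succ))))]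
      simp only [Fintype.sum_prod_type]
      rw [Finset.sum_congr rfl (fun ys _ => Finset.sum_comm)]
      have inner : ∀ (ys : Fin (n+1) → X) (bs : Fin n → A),
          ∑ x' : X, ∑ a : A,
            trajProb (n+1) Q d s (Fin.snoc ys x') (Fin.snoc bs a) *
              (∑ t : Fin (n+1), ψ t ((Fin.snoc ys x' : Fin (n+2) → X) t.castSucc)
                ((Fin.snoc bs a : Fin (n+1) → A) t) ((Fin.snoc ys x' : Fin (n+2) → X) t.succ))
          = P ys bs * S ys bs +
            P ys bs * ∑ a : A, d (Fin.last n) (ys (Fin.last n)) a * G ys a := by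
        intro ys bs
        rw [Finset.sum_comm]
        have pera : ∀ a : A,
            ∑ x' : X,
              trajProb (n+1) Q d s (Fin.snoc ys x') (Fin.snoc bs a) *
                (∑ t : Fin (n+1), ψ t ((Fin.snoc ys x' : Fin (n+2) → X) t.castSucc)
                  ((Fin.snoc bs a : Fin (n+1) → A) t) ((Fin.snoc ys x' : Fin (n+2) → X) t.succ))
            = P ys bs * (d (Fin.last n) (ys (Fin.last n)) a * S ys bs) +
              P ys bs * (d (Fin.last n) (ys (Fin.last n)) a * G ys a) := by
          intro a
          have e : ∀ x' : X,
              trajProb (n+1) Q d s (Fin.snoc ys x') (Fin.snoc bs a) *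
                (∑ t : Fin (n+1), ψ t ((Fin.snoc ys x' : Fin (n+2) → X) t.castSucc)
                  ((Fin.snoc bs a : Fin (n+1) → A) t) ((Fin.snoc ys x' : Fin (n+2) → X) t.succ))
              = (P ys bs * (d (Fin.last n) (ys (Fin.last n)) a * S ys bs)) *
                  Q (ys (Fin.last n)) a x' +
                (P ys bs * d (Fin.last n) (ys (Fin.last n)) a) *
                  (ψ n (ys (Fin.last n)) a x' * Q (ys (Fin.last n)) a x') := by
            intro x'
            rw [trajProb_snoc, hsum_split]
            ring
          rw [Finset.sum_congr rfl (fun x' _ => e x'), Finset.sum_add_distrib,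
            ← Finset.mul_sum, ← Finset.mul_sum, hQsum, mul_one]
          simp only [hG]
          ring
        rw [Finset.sum_congr rfl (fun a _ => pera a), Finset.sum_add_distrib,
          ← Finset.mul_sum, ← Finset.mul_sum, ← Finset.sum_mul, hd, one_mul]
      rw [Finset.sum_congr rfl (fun ys _ => Finset.sum_congr rfl (fun bs _ => inner ys bs))]
      rw [← Finset.sum_add_distrib]
      apply Finset.sum_congr rfl
      intro ys _
      rw [← Finset.sum_add_distrib]
    have rhs_eq :
        ∑ xs : Fin (n+1+1) → X, ∑ as : Fin (n+1) → A,
          trajProb (n+1) Q d s xs as *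
            (∑ t : Fin (n+1), ∑ x' : X, ψ t (xs t.castSucc) (as t) x' * Q (xs t.castSucc) (as t) x')
        = (∑ ys : Fin (n+1) → X, ∑ bs : Fin n → A, P ys bs * Sb ys bs) +
          ∑ ys : Fin (n+1) → X, ∑ bs : Fin n → A,
            P ys bs * ∑ a : A, d (Fin.last n) (ys (Fin.last n)) a * G ys a := by
      rw [sum_snoc]
      rw [Finset.sum_congr rfl (fun p _ => sum_snoc n (fun as =>
        trajProb (n+1) Q d s (Fin.snoc p.1 p.2) as *
          (∑ t : Fin (n+1), ∑ x'' : X,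
            ψ t ((Fin.snoc p.1 p.2 : Fin (n+2) → X) t.castSucc) (as t) x'' *
            Q ((Fin.snoc p.1 p.2 : Fin (n+2) → X) t.castSucc) (as t) x'')))]
      simp only [Fintype.sum_prod_type]
      rw [Finset.sum_congr rfl (fun ys _ => Finset.sum_comm)]
      have inner : ∀ (ys : Fin (n+1) → X) (bs : Fin n → A),
          ∑ x' : X, ∑ a : A,
            trajProb (n+1) Q d s (Fin.snoc ys x') (Fin.snoc bs a) *
              (∑ t : Fin (n+1), ∑ x'' : X,
                ψ t ((Fin.snoc ys x' : Fin (n+2) → X) t.castSucc)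
                  ((Fin.snoc bs a : Fin (n+1) → A) t) x'' *
                Q ((Fin.snoc ys x' : Fin (n+2) → X) t.castSucc)
                  ((Fin.snoc bs a : Fin (n+1) → A) t) x'')
          = P ys bs * Sb ys bs +
            P ys bs * ∑ a : A, d (Fin.last n) (ys (Fin.last n)) a * G ys a := by
        intro ys bs
        rw [Finset.sum_comm]
        have pera : ∀ a : A,
            ∑ x' : X,
              trajProb (n+1) Q d s (Fin.snoc ys x') (Fin.snoc bs a) *
                (∑ t : Fin (n+1), ∑ x'' : X,
                  ψ t ((Fin.snoc ys x' : Fin (n+2) → X) t.castSucc)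
                    ((Fin.snoc bs a : Fin (n+1) → A) t) x'' *
                  Q ((Fin.snoc ys x' : Fin (n+2) → X) t.castSucc)
                    ((Fin.snoc bs a : Fin (n+1) → A) t) x'')
            = P ys bs * (d (Fin.last n) (ys (Fin.last n)) a * Sb ys bs) +
              P ys bs * (d (Fin.last n) (ys (Fin.last n)) a * G ys a) := by
          intro a
          have e : ∀ x' : X,
              trajProb (n+1) Q d s (Fin.snoc ys x') (Fin.snoc bs a) *
                (∑ t : Fin (n+1), ∑ x'' : X,
                  ψ t ((Fin.snoc ys x' : Fin (n+2) → X) t.castSucc)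
                    ((Fin.snoc bs a : Fin (n+1) → A) t) x'' *
                  Q ((Fin.snoc ys x' : Fin (n+2) → X) t.castSucc)
                    ((Fin.snoc bs a : Fin (n+1) → A) t) x'')
              = (P ys bs * (d (Fin.last n) (ys (Fin.last n)) a * Sb ys bs) +
                  P ys bs * (d (Fin.last n) (ys (Fin.last n)) a * G ys a)) *
                  Q (ys (Fin.last n)) a x' := by
            intro x'
            rw [trajProb_snoc, hbar_split]
            ring
          rw [Finset.sum_congr rfl (fun x' _ => e x'), ← Finset.mul_sum, hQsum, mul_one]
        rw [Finset.sum_congr rfl (fun a _ => pera a), Finset.sum_add_distrib,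
          ← Finset.mul_sum, ← Finset.mul_sum, ← Finset.sum_mul, hd, one_mul]
      rw [Finset.sum_congr rfl (fun ys _ => Finset.sum_congr rfl (fun bs _ => inner ys bs))]
      rw [← Finset.sum_add_distrib]
      apply Finset.sum_congr rfl
      intro ys _
      rw [← Finset.sum_add_distrib]
    rw [lhs_eq, rhs_eq, ih d' hd']

lemma Qbar_eq {X A : Type*} (K : ℕ) (Q : X → A → X → ℝ)
    (f : ℕ → Fin (K + 1) → X → A → X → ℝ) (t : ℕ) (x : X) (z : ZVec K) (a : A)
    (x' : X) (z' : ZVec K) :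
    Qbar K Q f t x z a x' z' = Q x a x' * ∏ j, rhot (f (t - 1) j x a x') (z j) (z' j) := by
  unfold Qbar
  by_cases h : ∃ i, z i = 0 ∧ z' i = 1
  · rw [if_pos h]
    obtain ⟨i, hi⟩ := h
    rw [Finset.prod_eq_zero (Finset.mem_univ i)]
    · ring
    · rw [rhot, if_pos hi]
  · rw [if_neg h]
    push_neg at h
    congr 1
    apply Finset.prod_congr rfl
    intro j _
    rw [rhot, if_neg]
    intro hj
    exact (h j hj.1) hj.2

lemma trajProbBar_eq {X A : Type*} [DecidableEq X] (T K : ℕ)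
    (Q : X → A → X → ℝ) (f : ℕ → Fin (K + 1) → X → A → X → ℝ)
    (dbar : Fin T → X × ZVec K → A → ℝ) (hind : Indiff dbar) (s : X)
    (xs : Fin (T+1) → X) (zs : Fin (T+1) → ZVec K) (as : Fin T → A) :
    trajProbBar T K Q f dbar s (fun u => (xs u, zs u)) as =
      trajProb T Q (Gamma dbar) s xs as *
        ((if zs 0 = oneVec K then 1 else 0) *
          ∏ t : Fin T, ∏ j, rhot (f t j (xs t.castSucc) (as t) (xs t.succ))
            (zs t.castSucc j) (zs t.succ j)) := by
  unfold trajProbBar trajProb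
  have hi : (if (xs 0, zs 0) = (s, oneVec K) then (1:ℝ) else 0) =
      (if xs 0 = s then 1 else 0) * (if zs 0 = oneVec K then 1 else 0) := by
    by_cases h1 : xs 0 = s <;> by_cases h2 : zs 0 = oneVec K <;>
      simp [h1, h2, Prod.ext_iff]
  have hterm : ∀ t : Fin T,
      dbar t (xs t.castSucc, zs t.castSucc) (as t) *
        Qbar K Q f ((t : ℕ) + 1) (xs t.castSucc) (zs t.castSucc) (as t) (xs t.succ) (zs t.succ)
      = (Gamma dbar t (xs t.castSucc) (as t) * Q (xs t.castSucc) (as t) (xs t.succ)) *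
        ∏ j, rhot (f t j (xs t.castSucc) (as t) (xs t.succ)) (zs t.castSucc j) (zs t.succ j) := by
    intro t
    rw [hind t, Qbar_eq, Nat.add_sub_cancel]
    rw [Gamma]
    ring
  rw [Finset.prod_congr rfl (fun t _ => hterm t), Finset.prod_mul_distrib]
  simp only [hi]
  ring

lemma wbar_eq_w {X A : Type*} [Fintype X] [Fintype A] [DecidableEq X] [DecidableEq A]
    (T K : ℕ) (Q : X → A → X → ℝ) (hQsum : ∀ x a, ∑ x' : X, Q x a x' = 1)
    (f r : ℕ → Fin (K + 1) → X → A → X → ℝ) (α : Fin (K + 1) → ℝ)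
    (dbar : Fin T → X × ZVec K → A → ℝ)
    (hd : ∀ (t : Fin T) (xz : X × ZVec K), ∑ a : A, dbar t xz a = 1)
    (hind : Indiff dbar) (s : X) (i : Fin (K + 1)) :
    wbarcost T K Q f r α dbar s i = wcost T Q r f α (Gamma dbar) s i := by
  set d := Gamma dbar with hdG
  have hdsum : ∀ (t : Fin T) (x : X), ∑ a : A, d t x a = 1 := fun t x => hd t (x, oneVec K)
  -- Step 1: change of variables and z-marginalization in wbarcost
  have step1 : wbarcost T K Q f r α dbar s i =
      ∑ xs : Fin (T+1) → X, ∑ as : Fin T → A,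
        trajProb T Q d s xs as *
          ((∑ t : Fin T, rbar Q r t i (xs t.castSucc) (as t)) +
            α i * ∏ t : Fin T, f t i (xs t.castSucc) (as t) (xs t.succ)) := by
    unfold wbarcost
    rw [Fintype.sum_equiv ((Equiv.arrowProdEquivProdArrow (Fin (T+1)) (fun _ => X) (fun _ => ZVec K)).symm)
      (fun p : (Fin (T+1) → X) × (Fin (T+1) → ZVec K) =>
        ∑ as : Fin T → A, trajProbBar T K Q f dbar s (fun u => (p.1 u, p.2 u)) as *
          ((∑ t : Fin T, rbar Q r t i (p.1 t.castSucc) (as t)) +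
            α i * (((p.2 (Fin.last T) i : ℕ)) : ℝ)))
      _ (fun p => rfl) |>.symm]
    rw [Fintype.sum_prod_type]
    apply Finset.sum_congr rfl
    intro xs _
    rw [Finset.sum_comm]
    apply Finset.sum_congr rfl
    intro as _
    have e1 : ∀ zs : Fin (T+1) → ZVec K,
        trajProbBar T K Q f dbar s (fun u => (xs u, zs u)) as *
          ((∑ t : Fin T, rbar Q r t i (xs t.castSucc) (as t)) +
            α i * (((zs (Fin.last T) i : ℕ)) : ℝ))
        = trajProb T Q d s xs as *
          (((∑ t : Fin T, rbar Q r t i (xs t.castSucc) (as t)) *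
            ((if zs 0 = oneVec K then 1 else 0) *
              ∏ t : Fin T, ∏ j, rhot (f t j (xs t.castSucc) (as t) (xs t.succ))
                (zs t.castSucc j) (zs t.succ j))) +
          α i * (((if zs 0 = oneVec K then 1 else 0) *
              ∏ t : Fin T, ∏ j, rhot (f t j (xs t.castSucc) (as t) (xs t.succ))
                (zs t.castSucc j) (zs t.succ j)) *
            (((zs (Fin.last T) i : ℕ)) : ℝ))) := by
      intro zs
      rw [trajProbBar_eq T K Q f dbar hind s xs zs as]
      ring
    rw [Finset.sum_congr rfl (fun zs _ => e1 zs), ← Finset.mul_sum, Finset.sum_add_distrib,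
      ← Finset.mul_sum, ← Finset.mul_sum,
      zsum_one T K (fun t j => f t j (xs t.castSucc) (as t) (xs t.succ)),
      zsum_z T K (fun t j => f t j (xs t.castSucc) (as t) (xs t.succ)) i, mul_one]
  -- Step 2: the tower property
  rw [step1]
  unfold wcost
  have split1 : ∀ (xs : Fin (T+1) → X) (as : Fin T → A),
      trajProb T Q d s xs as *
        ((∑ t : Fin T, rbar Q r t i (xs t.castSucc) (as t)) +
          α i * ∏ t : Fin T, f t i (xs t.castSucc) (as t) (xs t.succ))
      = trajProb T Q d s xs as * (∑ t : Fin T, rbar Q r t i (xs t.castSucc) (as t)) +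
        trajProb T Q d s xs as *
          (α i * ∏ t : Fin T, f t i (xs t.castSucc) (as t) (xs t.succ)) := by
    intro xs as; ring
  have split2 : ∀ (xs : Fin (T+1) → X) (as : Fin T → A),
      trajProb T Q d s xs as *
        ((∑ t : Fin T, r t i (xs t.castSucc) (as t) (xs t.succ)) +
          α i * ∏ t : Fin T, f t i (xs t.castSucc) (as t) (xs t.succ))
      = trajProb T Q d s xs as * (∑ t : Fin T, r t i (xs t.castSucc) (as t) (xs t.succ)) +
        trajProb T Q d s xs as *
          (α i * ∏ t : Fin T, f t i (xs t.castSucc) (as t) (xs t.succ)) := by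
    intro xs as; ring
  simp only [split1, split2, Finset.sum_add_distrib]
  congr 1
  have htower := tower T Q hQsum d hdsum s (fun t x a x' => r t i x a x')
  rw [htower]
  rfl

/-- `η* ∈ Π̄` is an optimizer of the augmented constrained problem (P̄) if and only if
`Γ(η*)` is an optimizer of the original constrained problem (P). -/
theorem optimizer_iff_projection_optimizer {X A : Type*}
    [Fintype X] [Fintype A] [Nonempty X] [Nonempty A]
    [DecidableEq X] [DecidableEq A]
    (T K : ℕ) (hT : 1 ≤ T)
    (Q : X → A → X → ℝ)
    (hQnn : ∀ x a x', 0 ≤ Q x a x') (hQle : ∀ x a x', Q x a x' ≤ 1)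
    (hQsum : ∀ x a, ∑ x' : X, Q x a x' = 1)
    (f : ℕ → Fin (K + 1) → X → A → X → ℝ)
    (hf : ∀ t, t ≤ T - 1 → ∀ i x a x', 0 ≤ f t i x a x' ∧ f t i x a x' ≤ 1)
    (r : ℕ → Fin (K + 1) → X → A → X → ℝ) (α b : Fin (K + 1) → ℝ)
    (s : X)
    (dbar : Fin T → X × ZVec K → A → ℝ)
    (hmr : IsMR dbar) (hind : Indiff dbar) :
    ((∀ i : Fin (K + 1), 1 ≤ (i : ℕ) → wbarcost T K Q f r α dbar s i ≤ b i) ∧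
      ∀ η : Fin T → X × ZVec K → A → ℝ, IsMR η → Indiff η →
        (∀ i : Fin (K + 1), 1 ≤ (i : ℕ) → wbarcost T K Q f r α η s i ≤ b i) →
        wbarcost T K Q f r α dbar s 0 ≤ wbarcost T K Q f r α η s 0) ↔
    ((∀ i : Fin (K + 1), 1 ≤ (i : ℕ) → wcost T Q r f α (Gamma dbar) s i ≤ b i) ∧
      ∀ d : Fin T → X → A → ℝ, IsMR d →
        (∀ i : Fin (K + 1), 1 ≤ (i : ℕ) → wcost T Q r f α d s i ≤ b i) →
        wcost T Q r f α (Gamma dbar) s 0 ≤ wcost T Q r f α d s 0) := by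
  have hEq : ∀ (η : Fin T → X × ZVec K → A → ℝ), IsMR η → Indiff η →
      ∀ i, wbarcost T K Q f r α η s i = wcost T Q r f α (Gamma η) s i := by
    intro η hη hηind i
    exact wbar_eq_w T K Q hQsum f r α η (fun t xz => (hη t xz).2) hηind s i
  constructor
  · rintro ⟨hc, hopt⟩
    refine ⟨fun i hi => (hEq dbar hmr hind i) ▸ hc i hi, ?_⟩
    intro dpol hdMR hdc
    set η : Fin T → X × ZVec K → A → ℝ := fun t xz a => dpol t xz.1 a with hηdef
    have hηMR : IsMR η := fun t xz => hdMR t xz.1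
    have hηind : Indiff η := fun t x z a => rfl
    have hEqη : ∀ i, wbarcost T K Q f r α η s i = wcost T Q r f α dpol s i := by
      intro i
      exact hEq η hηMR hηind i
    have h := hopt η hηMR hηind (fun i hi => (hEqη i) ▸ hdc i hi)
    calc wcost T Q r f α (Gamma dbar) s 0
        = wbarcost T K Q f r α dbar s 0 := (hEq dbar hmr hind 0).symm
      _ ≤ wbarcost T K Q f r α η s 0 := h
      _ = wcost T Q r f α dpol s 0 := hEqη 0
  · rintro ⟨hc, hopt⟩
    refine ⟨fun i hi => (hEq dbar hmr hind i) ▸ hc i hi, ?_⟩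
    intro η hηMR hηind hηc
    have hGMR : IsMR (Gamma η) := fun t x => hηMR t (x, oneVec K)
    have h := hopt (Gamma η) hGMR (fun i hi => (hEq η hηMR hηind i) ▸ hηc i hi)
    calc wbarcost T K Q f r α dbar s 0
        = wcost T Q r f α (Gamma dbar) s 0 := hEq dbar hmr hind 0
      _ ≤ wcost T Q r f α (Gamma η) s 0 := h
      _ = wbarcost T K Q f r α η s 0 := (hEq η hηMR hηind 0).symm
end
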